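/- arXiv:0902.4776 — 6 statements merged into one kernel-verified Lean document; each statement's English description precedes it below -/
import Mathlib

section
/- Let P ∈ K[t] be a nonzero polynomial. Since K is algebraically closed, write P(t) = a·t^k·∏_{i=1}^{n−k}(1 − λ_i·t), where a ∈ K is nonzero, k is the multiplicity of 0 as a root of P, and λ_1, …, λ_{n−k} ∈ K∖{0} are the reciprocals of the nonzero roots of P listed with multiplicity. Set l_q(P) = Σ_{i with v_q(λ_i) ≤ 1} (1 − v_q(λ_i)). Then: (i) for every root of unity ε ∈ K with P(ε·q⁻¹) ≠ 0 one has v_q(P(ε·q⁻¹)) ≥ v_q(a) − k − l_q(P); and (ii) for all but finitely many roots of unity ε ∈ K of order coprime to p one has P(ε·q⁻¹) ≠ 0 and v_q(P(ε·q⁻¹)) = v_q(a) − k − l_q(P). In particular, the minimum of v_q(P(ε·q⁻¹)) over all roots of unity ε ∈ K equals v_q(a) − k − l_q(P). -/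
/-! Put `x = ε / q`, so `v_q(x) = -1` and `P(x) = a x^k ∏ (1 - λᵢ x)`. By the ultrametric
inequality `v_q(1 - λᵢ x) ≥ min(0, v_q(λᵢ) - 1)`, with equality unless `|1 - λᵢ x| < 1`.
That can happen only if `|λᵢ x| = 1`, and then for at most one root of unity `ε` of order prime
to `p`: two such roots are at distance exactly `1`, because `1 - ζ` divides `m` when `ζ ^ m = 1`
and `ζ ≠ 1`, and `|m| = 1` when `p ∤ m`. As there are infinitely many such roots, the bound is
attained. -/

/-- The additive valuation on the algebraic closure of `ℚ_[p]` attached to an absolute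
value `v`, normalised so that `q = p ^ d` has valuation `1`. -/
noncomputable def vq (p d : ℕ) [Fact p.Prime] (v : AlgebraicClosure ℚ_[p] → ℝ)
    (x : AlgebraicClosure ℚ_[p]) : ℝ :=
  -Real.log (v x) / Real.log ((p : ℝ) ^ d)

/-- `ε` is a root of unity. -/
def IsRootOfUnity {K : Type*} [Monoid K] (ε : K) : Prop :=
  ∃ m : ℕ, 0 < m ∧ ε ^ m = 1

/-- `ε` is a root of unity of order coprime to `p`. -/
def IsPrimeToRootOfUnity (p : ℕ) {K : Type*} [Monoid K] (ε : K) : Prop :=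
  ∃ m : ℕ, 0 < m ∧ ¬ p ∣ m ∧ ε ^ m = 1

open Finset Polynomial

theorem IsRootOfUnity.ne_zero {M₀ : Type*} [MonoidWithZero M₀] [Nontrivial M₀] {ε : M₀}
    (hε : IsRootOfUnity ε) : ε ≠ 0 := by
  rintro rfl
  obtain ⟨m, hm, h⟩ := hε
  simp [hm.ne'] at h

theorem IsPrimeToRootOfUnity.isRootOfUnity {p : ℕ} {M : Type*} [Monoid M] {ε : M}
    (hε : IsPrimeToRootOfUnity p ε) : IsRootOfUnity ε :=
  let ⟨m, hm, _, h⟩ := hε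
  ⟨m, hm, h⟩

theorem setOf_isPrimeToRootOfUnity_infinite {F : Type*} [Field F] [IsAlgClosed F] [CharZero F]
    {p : ℕ} (hp : 1 < p) : {ε : F | IsPrimeToRootOfUnity p ε}.Infinite := by
  have (j : ℕ) : ∃ ζ : F, IsPrimitiveRoot ζ (p * j + 1) :=
    HasEnoughRootsOfUnity.exists_primitiveRoot F _
  choose ζ hζ using this
  refine Set.infinite_of_injective_forall_mem (f := ζ) (fun j j' h => ?_) fun j => ?_
  · have := (hζ j).eq_orderOf.trans (h ▸ (hζ j').eq_orderOf.symm)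
    simpa [(zero_lt_one.trans hp).ne'] using this
  · refine ⟨p * j + 1, by positivity, fun h => ?_, (hζ j).pow_eq_one⟩
    rw [Nat.dvd_add_right (dvd_mul_right p j), Nat.dvd_one] at h
    exact hp.ne' h

namespace AbsoluteValue

variable {F : Type*} [Field F]

theorem exists_coe_eq_of_isNonarchimedean (v : F → ℝ) (hmul : ∀ x y, v (x * y) = v x * v y)
    (hna : IsNonarchimedean v) (h0 : v 0 = 0) (hneg : v (-1) = 1) :
    ∃ abv : AbsoluteValue F ℝ, ⇑abv = v := by
  have h1 : v 1 = 1 := by simpa [hneg] using hmul (-1) (-1)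
  have hnonneg (x : F) : 0 ≤ v x := by
    have h := hna x (-1 * x)
    rwa [hmul, hneg, one_mul, max_self, neg_one_mul, add_neg_cancel, h0] at h
  have hne (x : F) (hx : x ≠ 0) : v x ≠ 0 := fun hvx => by
    simpa [hvx, hx, h1] using hmul x x⁻¹
  exact ⟨⟨⟨v, hmul⟩, hnonneg, fun x => ⟨not_imp_not.mp (hne x), fun hx => hx ▸ h0⟩,
    fun _ _ => hna.add_le hnonneg⟩, rfl⟩

variable {abv : AbsoluteValue F ℝ}

theorem map_sub_le_max (hna : IsNonarchimedean abv) (a b : F) :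
    abv (a - b) ≤ max (abv a) (abv b) := by
  simpa [sub_eq_add_neg] using hna a (-b)

theorem map_eq_of_map_sub_lt (hna : IsNonarchimedean abv) {a b : F} (h : abv (a - b) < abv a) :
    abv b = abv a := by
  simpa using hna.add_eq_left_of_lt (x := a) (y := -(a - b)) (by rwa [abv.map_neg])

theorem map_eq_one_of_isRootOfUnity {ε : F} (hε : IsRootOfUnity ε) : abv ε = 1 := by
  obtain ⟨m, hm, hεm⟩ := hε
  rw [← pow_eq_one_iff_of_nonneg (abv.nonneg ε) hm.ne', ← abv.map_pow, hεm, abv.map_one]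

/-- Multiplying `ζ - 1` by `∑_{j < m} ∑_{i < j} ζ ^ i` gives `∑_{j < m} (ζ ^ j - 1) = -m`; both
factors have absolute value at most `1`, so both have absolute value exactly `1`. -/
theorem map_sub_one_eq_one_of_pow_eq_one (hna : IsNonarchimedean abv) {ζ : F} {m : ℕ}
    (hζm : ζ ^ m = 1) (hζ : ζ ≠ 1) (hm : abv m = 1) : abv (ζ - 1) = 1 := by
  have hm0 : 0 < m := Nat.pos_of_ne_zero <| by rintro rfl; simp at hm
  set S := ∑ j ∈ range m, ∑ i ∈ range j, ζ ^ i
  have hS : S * (ζ - 1) = -m := by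
    rw [sum_mul]
    simp_rw [geom_sum_mul]
    rw [sum_sub_distrib, geom_sum_eq hζ, hζm]
    simp
  have hζ1 : abv ζ = 1 := map_eq_one_of_isRootOfUnity ⟨m, hm0, hζm⟩
  have hsum_le {s : Finset ℕ} {f : ℕ → F} (hf : ∀ i ∈ s, abv (f i) ≤ 1) :
      abv (∑ i ∈ s, f i) ≤ 1 :=
    sum_induction _ (abv · ≤ 1) (fun x y hx hy => (hna x y).trans (max_le hx hy)) (by simp) hf
  have hS_le : abv S ≤ 1 :=
    hsum_le fun j _ => hsum_le fun i _ => by rw [abv.map_pow, hζ1, one_pow]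
  have h_le : abv (ζ - 1) ≤ 1 := by simpa [hζ1] using map_sub_le_max hna ζ 1
  have h_mul : abv S * abv (ζ - 1) = 1 := by rw [← abv.map_mul, hS, abv.map_neg, hm]
  nlinarith [abv.nonneg S, abv.nonneg (ζ - 1)]

theorem pairwise_map_sub_eq_one {p : ℕ} (hp : p.Prime) (hna : IsNonarchimedean abv)
    (habv : ∀ m : ℕ, ¬ p ∣ m → abv m = 1) :
    {ε : F | IsPrimeToRootOfUnity p ε}.Pairwise fun ε ε' => abv (ε - ε') = 1 := by
  rintro ε ⟨m, hm, hpm, hεm⟩ ε' hε' hne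
  have hε'1 : abv ε' = 1 := map_eq_one_of_isRootOfUnity hε'.isRootOfUnity
  have hε'0 : ε' ≠ 0 := hε'.isRootOfUnity.ne_zero
  obtain ⟨m', hm', hpm', hεm'⟩ := hε'
  have hζ : (ε / ε') ^ (m * m') = 1 := by
    rw [div_pow, pow_mul, hεm, mul_comm, pow_mul, hεm', one_pow, one_pow, div_one]
  have hζ1 : ε / ε' ≠ 1 := by rwa [Ne, div_eq_one_iff_eq hε'0]
  have hmm' : abv ↑(m * m') = 1 := habv _ fun h => (hp.dvd_mul.mp h).elim hpm hpm'
  rw [show ε - ε' = ε' * (ε / ε' - 1) by field_simp, abv.map_mul,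
    map_sub_one_eq_one_of_pow_eq_one hna hζ hζ1 hmm', hε'1, one_mul]

/-- If `|1 - ε c| < 1` and `|1 - ε' c| < 1` then `|c| = 1` and `|(ε - ε') c| < 1`, so `ε = ε'`. -/
theorem subsingleton_setOf_map_one_sub_mul_lt_one (hna : IsNonarchimedean abv) {S : Set F}
    (hS : ∀ ε ∈ S, abv ε = 1) (hS' : S.Pairwise fun ε ε' => abv (ε - ε') = 1) (c : F) :
    {ε ∈ S | abv (1 - ε * c) < 1}.Subsingleton := by
  rintro ε ⟨hεS, hε⟩ ε' ⟨hε'S, hε'⟩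
  by_contra hne
  have hc : abv c = 1 := by
    have := map_eq_of_map_sub_lt hna (a := 1) (b := ε * c) (by rwa [abv.map_one])
    rwa [abv.map_mul, hS ε hεS, one_mul, abv.map_one] at this
  have hlt : abv ((ε' - ε) * c) < 1 := by
    rw [show (ε' - ε) * c = (1 - ε * c) - (1 - ε' * c) by ring]
    exact (map_sub_le_max hna _ _).trans_lt (max_lt hε hε')
  rw [abv.map_mul, hS' hε'S hεS (Ne.symm hne), hc, one_mul] at hlt
  exact hlt.false

end AbsoluteValue

theorem log_natCast_pow_pos {p d : ℕ} (hp : 1 < p) (hd : 0 < d) : 0 < Real.log ((p : ℝ) ^ d) :=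
  Real.log_pos (one_lt_pow₀ (by exact_mod_cast hp) hd.ne')

section Valuation

variable {p : ℕ} [Fact p.Prime] {d : ℕ} {abv : AbsoluteValue (AlgebraicClosure ℚ_[p]) ℝ}

local notation "K" => AlgebraicClosure ℚ_[p]

theorem vq_one : vq p d abv 1 = 0 := by
  simp [vq]

theorem vq_mul {x y : K} (hx : x ≠ 0) (hy : y ≠ 0) :
    vq p d abv (x * y) = vq p d abv x + vq p d abv y := by
  simp only [vq, abv.map_mul, Real.log_mul (abv.ne_zero_iff.mpr hx) (abv.ne_zero_iff.mpr hy)]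
  ring

theorem vq_pow (x : K) (n : ℕ) : vq p d abv (x ^ n) = n * vq p d abv x := by
  simp only [vq, abv.map_pow, Real.log_pow]
  ring

theorem vq_prod {ι : Type*} {s : Finset ι} {f : ι → K} (hf : ∀ i ∈ s, f i ≠ 0) :
    vq p d abv (∏ i ∈ s, f i) = ∑ i ∈ s, vq p d abv (f i) := by
  simp only [vq, map_prod, Real.log_prod fun i hi => abv.ne_zero_iff.mpr (hf i hi), sum_div,
    ← sum_neg_distrib, neg_div]

theorem vq_mul_pow_mul_prod {ι : Type*} {s : Finset ι} {a x : K} {f : ι → K} (ha : a ≠ 0)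
    (hx : x ≠ 0) (hf : ∀ i ∈ s, f i ≠ 0) (k : ℕ) :
    vq p d abv (a * x ^ k * ∏ i ∈ s, f i) =
      vq p d abv a + k * vq p d abv x + ∑ i ∈ s, vq p d abv (f i) := by
  rw [vq_mul (mul_ne_zero ha (pow_ne_zero k hx)) (prod_ne_zero_iff.mpr hf),
    vq_mul ha (pow_ne_zero k hx), vq_pow, vq_prod hf]

theorem vq_le_vq_iff (hd : 0 < d) {x y : K} (hx : x ≠ 0) (hy : y ≠ 0) :
    vq p d abv x ≤ vq p d abv y ↔ abv y ≤ abv x := by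
  rw [vq, vq, div_le_div_iff_of_pos_right (log_natCast_pow_pos (Fact.out : p.Prime).one_lt hd),
    neg_le_neg_iff, Real.log_le_log_iff (abv.pos_iff.mpr hy) (abv.pos_iff.mpr hx)]

theorem min_vq_le_vq_iff (hd : 0 < d) {x y z : K} (hx : x ≠ 0) (hy : y ≠ 0) (hz : z ≠ 0) :
    min (vq p d abv x) (vq p d abv y) ≤ vq p d abv z ↔ abv z ≤ max (abv x) (abv y) := by
  rw [min_le_iff, le_max_iff, vq_le_vq_iff hd hx hz, vq_le_vq_iff hd hy hz]

theorem vq_le_min_iff (hd : 0 < d) {x y z : K} (hx : x ≠ 0) (hy : y ≠ 0) (hz : z ≠ 0) :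
    vq p d abv z ≤ min (vq p d abv x) (vq p d abv y) ↔ max (abv x) (abv y) ≤ abv z := by
  rw [le_min_iff, max_le_iff, vq_le_vq_iff hd hz hx, vq_le_vq_iff hd hz hy]

theorem min_zero_vq_le_vq_one_sub (hd : 0 < d) (hna : IsNonarchimedean abv) {u : K}
    (hu : u ≠ 0) (h : 1 - u ≠ 0) : min 0 (vq p d abv u) ≤ vq p d abv (1 - u) := by
  rw [← vq_one (p := p) (d := d) (abv := abv), min_vq_le_vq_iff hd one_ne_zero hu h]
  exact abv.map_sub_le_max hna 1 u

/-- Equality in the ultrametric inequality: `|u| = |1 - (1 - u)| ≤ max 1 |1 - u| = |1 - u|`. -/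
theorem vq_one_sub_eq_min (hd : 0 < d) (hna : IsNonarchimedean abv) {u : K} (hu : u ≠ 0)
    (h : 1 ≤ abv (1 - u)) : vq p d abv (1 - u) = min 0 (vq p d abv u) := by
  have h0 : 1 - u ≠ 0 := abv.pos_iff.mp (one_pos.trans_le h)
  refine le_antisymm ?_ (min_zero_vq_le_vq_one_sub hd hna hu h0)
  rw [← vq_one (p := p) (d := d) (abv := abv), vq_le_min_iff hd one_ne_zero hu h0, abv.map_one,
    max_le_iff]
  refine ⟨h, ?_⟩
  simpa [max_eq_right h] using abv.map_sub_le_max hna 1 (1 - u)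

theorem map_natCast_eq_one (hext : ∀ x : ℚ_[p], abv (algebraMap ℚ_[p] K x) = ‖x‖) {m : ℕ}
    (hm : ¬ p ∣ m) : abv m = 1 := by
  rw [← map_natCast (algebraMap ℚ_[p] K), hext, Padic.norm_natCast_eq_one_iff,
    (Fact.out : p.Prime).coprime_iff_not_dvd]
  exact hm

theorem vq_mul_inv_pow_eq_neg_one (hext : ∀ x : ℚ_[p], abv (algebraMap ℚ_[p] K x) = ‖x‖)
    (hd : 0 < d) {ε : K} (hε : IsRootOfUnity ε) : vq p d abv (ε * ((p : K) ^ d)⁻¹) = -1 := by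
  have hp : abv (p : K) = (p : ℝ)⁻¹ := by
    rw [← map_natCast (algebraMap ℚ_[p] K), hext, Padic.norm_p]
  rw [vq, abv.map_mul, abv.map_eq_one_of_isRootOfUnity hε, map_inv₀, abv.map_pow, hp,
    inv_pow, inv_inv, one_mul, neg_div,
    div_self (log_natCast_pow_pos (Fact.out : p.Prime).one_lt hd).ne']

theorem finite_setOf_exists_map_one_sub_mul_lt_one
    (hext : ∀ x : ℚ_[p], abv (algebraMap ℚ_[p] K x) = ‖x‖) (hna : IsNonarchimedean abv)
    {ι : Type*} [Finite ι] (lam : ι → K) (c : K) :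
    {ε | IsPrimeToRootOfUnity p ε ∧ ∃ i, abv (1 - lam i * (ε * c)) < 1}.Finite := by
  have hS := abv.pairwise_map_sub_eq_one Fact.out hna fun m hm => map_natCast_eq_one hext hm
  refine (Set.finite_iUnion fun i => (abv.subsingleton_setOf_map_one_sub_mul_lt_one hna
    (fun ε hε => abv.map_eq_one_of_isRootOfUnity hε.isRootOfUnity) hS (lam i * c)).finite).subset ?_
  rintro ε ⟨hε, i, hi⟩
  exact Set.mem_iUnion.mpr ⟨i, hε, by rwa [mul_left_comm]⟩

theorem min_zero_vq_mul_eq {l x : K} (hl : l ≠ 0) (hx0 : x ≠ 0) (hx : vq p d abv x = -1) :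
    min 0 (vq p d abv (l * x)) = -(if vq p d abv l ≤ 1 then 1 - vq p d abv l else 0) := by
  rw [vq_mul hl hx0, hx]
  split_ifs with h
  · rw [min_eq_right (by linarith)]
    ring
  · rw [min_eq_left (by linarith), neg_zero]

variable {ι : Type*} [Fintype ι] {a x : AlgebraicClosure ℚ_[p]} {lam : ι → AlgebraicClosure ℚ_[p]}

theorem le_vq_mul_pow_mul_prod_one_sub (hd : 0 < d) (hna : IsNonarchimedean abv)
    (hlam : ∀ i, lam i ≠ 0) (hx0 : x ≠ 0) (hx : vq p d abv x = -1) {k : ℕ}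
    (hne : (a * x ^ k * ∏ i, (1 - lam i * x)) ≠ 0) :
    vq p d abv a - k - (∑ i, if vq p d abv (lam i) ≤ 1 then 1 - vq p d abv (lam i) else 0) ≤
      vq p d abv (a * x ^ k * ∏ i, (1 - lam i * x)) := by
  have hf : ∀ i ∈ univ, 1 - lam i * x ≠ 0 := prod_ne_zero_iff.mp (right_ne_zero_of_mul hne)
  have hfactor : ∀ i ∈ univ, -(if vq p d abv (lam i) ≤ 1 then 1 - vq p d abv (lam i) else 0) ≤
      vq p d abv (1 - lam i * x) := fun i hi => min_zero_vq_mul_eq (hlam i) hx0 hx ▸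
    min_zero_vq_le_vq_one_sub hd hna (mul_ne_zero (hlam i) hx0) (hf i hi)
  rw [vq_mul_pow_mul_prod (left_ne_zero_of_mul (left_ne_zero_of_mul hne)) hx0 hf, hx,
    sub_eq_add_neg, ← sum_neg_distrib]
  linarith [sum_le_sum hfactor]

theorem vq_mul_pow_mul_prod_one_sub (hd : 0 < d) (hna : IsNonarchimedean abv) (ha : a ≠ 0)
    (hlam : ∀ i, lam i ≠ 0) (hx0 : x ≠ 0) (hx : vq p d abv x = -1) (k : ℕ)
    (h : ∀ i, 1 ≤ abv (1 - lam i * x)) :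
    vq p d abv (a * x ^ k * ∏ i, (1 - lam i * x)) =
      vq p d abv a - k - (∑ i, if vq p d abv (lam i) ≤ 1 then 1 - vq p d abv (lam i) else 0) := by
  have hf (i : ι) (_ : i ∈ univ) : 1 - lam i * x ≠ 0 := abv.pos_iff.mp (one_pos.trans_le (h i))
  rw [vq_mul_pow_mul_prod ha hx0 hf, hx, sub_eq_add_neg, ← sum_neg_distrib]
  simp only [← min_zero_vq_mul_eq (hlam _) hx0 hx,
    ← vq_one_sub_eq_min hd hna (mul_ne_zero (hlam _) hx0) (h _)]
  ring

theorem mul_pow_mul_prod_one_sub_ne_zero (ha : a ≠ 0) (hx0 : x ≠ 0) (k : ℕ)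
    (h : ∀ i, 1 ≤ abv (1 - lam i * x)) : a * x ^ k * ∏ i, (1 - lam i * x) ≠ 0 :=
  mul_ne_zero (mul_ne_zero ha (pow_ne_zero k hx0))
    (prod_ne_zero_iff.mpr fun i _ => abv.pos_iff.mp (one_pos.trans_le (h i)))

end Valuation

theorem padic_valuation_of_polynomial_at_roots_of_unity_general
    (p : ℕ) [Fact p.Prime] (d : ℕ) (hd : 0 < d)
    (v : AlgebraicClosure ℚ_[p] → ℝ)
    (hmul : ∀ x y, v (x * y) = v x * v y)
    (hna : ∀ x y, v (x + y) ≤ max (v x) (v y))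
    (hext : ∀ x : ℚ_[p], v (algebraMap ℚ_[p] (AlgebraicClosure ℚ_[p]) x) = ‖x‖)
    (P : Polynomial (AlgebraicClosure ℚ_[p]))
    (a : AlgebraicClosure ℚ_[p]) (ha : a ≠ 0)
    (k N : ℕ) (lam : Fin N → AlgebraicClosure ℚ_[p]) (hlam : ∀ i, lam i ≠ 0)
    (hfact : P = Polynomial.C a * Polynomial.X ^ k *
        ∏ i, (1 - Polynomial.C (lam i) * Polynomial.X)) :
    (∀ ε : AlgebraicClosure ℚ_[p], IsRootOfUnity ε →
        P.eval (ε * ((p : AlgebraicClosure ℚ_[p]) ^ d)⁻¹) ≠ 0 →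
        vq p d v a - k -
            (∑ i, if vq p d v (lam i) ≤ 1 then 1 - vq p d v (lam i) else 0) ≤
          vq p d v (P.eval (ε * ((p : AlgebraicClosure ℚ_[p]) ^ d)⁻¹))) ∧
    {ε : AlgebraicClosure ℚ_[p] | IsPrimeToRootOfUnity p ε ∧
        ¬ (P.eval (ε * ((p : AlgebraicClosure ℚ_[p]) ^ d)⁻¹) ≠ 0 ∧
          vq p d v (P.eval (ε * ((p : AlgebraicClosure ℚ_[p]) ^ d)⁻¹)) =
            vq p d v a - k -
              (∑ i, if vq p d v (lam i) ≤ 1 then 1 - vq p d v (lam i) else 0))}.Finite ∧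
    IsLeast {r : ℝ | ∃ ε : AlgebraicClosure ℚ_[p], IsRootOfUnity ε ∧
        P.eval (ε * ((p : AlgebraicClosure ℚ_[p]) ^ d)⁻¹) ≠ 0 ∧
        r = vq p d v (P.eval (ε * ((p : AlgebraicClosure ℚ_[p]) ^ d)⁻¹))}
      (vq p d v a - k -
        (∑ i, if vq p d v (lam i) ≤ 1 then 1 - vq p d v (lam i) else 0)) := by
  obtain ⟨abv, rfl⟩ := AbsoluteValue.exists_coe_eq_of_isNonarchimedean v hmul hna
    (by simpa using hext 0) (by simpa using hext (-1))
  subst hfact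
  simp only [eval_mul, eval_pow, eval_C, eval_X, eval_prod, eval_sub, eval_one]
  have hx0 {ε : AlgebraicClosure ℚ_[p]} (hε : IsRootOfUnity ε) :
      ε * ((p : AlgebraicClosure ℚ_[p]) ^ d)⁻¹ ≠ 0 := by
    simp [hε.ne_zero, (Fact.out : p.Prime).ne_zero]
  have hx {ε : AlgebraicClosure ℚ_[p]} (hε : IsRootOfUnity ε) :=
    vq_mul_inv_pow_eq_neg_one hext hd hε
  have hE := finite_setOf_exists_map_one_sub_mul_lt_one hext hna lam
    ((p : AlgebraicClosure ℚ_[p]) ^ d)⁻¹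
  have bound_le {ε : AlgebraicClosure ℚ_[p]} (hε : IsRootOfUnity ε) :=
    le_vq_mul_pow_mul_prod_one_sub hd hna hlam (hx0 hε) (hx hε) (k := k) (a := a)
  have attained {ε : AlgebraicClosure ℚ_[p]} (hε : IsRootOfUnity ε)
      (h : ∀ i, 1 ≤ abv (1 - lam i * (ε * ((p : AlgebraicClosure ℚ_[p]) ^ d)⁻¹))) :=
    And.intro (mul_pow_mul_prod_one_sub_ne_zero ha (hx0 hε) k h)
      (vq_mul_pow_mul_prod_one_sub hd hna ha hlam (hx0 hε) (hx hε) k h)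
  refine ⟨fun ε hε => bound_le hε, hE.subset ?_, ?_, fun r ⟨ε, hε, hne, hr⟩ => hr ▸ bound_le hε hne⟩
  · rintro ε ⟨hεS, hbad⟩
    refine ⟨hεS, ?_⟩
    by_contra! h
    exact hbad (attained hεS.isRootOfUnity h)
  · obtain ⟨ε, hεS, hεE⟩ :=
      ((setOf_isPrimeToRootOfUnity_infinite (Fact.out : p.Prime).one_lt).sdiff hE).nonempty
    obtain ⟨hne, heq⟩ :=
      attained hεS.isRootOfUnity fun i => not_lt.mp fun hi => hεE ⟨hεS, i, hi⟩
    exact ⟨ε, hεS.isRootOfUnity, hne, heq.symm⟩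

theorem padic_valuation_of_polynomial_at_roots_of_unity
    (p : ℕ) [Fact p.Prime] (d : ℕ) (hd : 0 < d)
    (v : AlgebraicClosure ℚ_[p] → ℝ)
    (hmul : ∀ x y, v (x * y) = v x * v y)
    (hna : ∀ x y, v (x + y) ≤ max (v x) (v y))
    (hext : ∀ x : ℚ_[p], v (algebraMap ℚ_[p] (AlgebraicClosure ℚ_[p]) x) = ‖x‖)
    (P : Polynomial (AlgebraicClosure ℚ_[p])) (hP : P ≠ 0)
    (a : AlgebraicClosure ℚ_[p]) (ha : a ≠ 0)
    (k N : ℕ) (lam : Fin N → AlgebraicClosure ℚ_[p]) (hlam : ∀ i, lam i ≠ 0)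
    (hfact : P = Polynomial.C a * Polynomial.X ^ k *
        ∏ i, (1 - Polynomial.C (lam i) * Polynomial.X)) :
    (∀ ε : AlgebraicClosure ℚ_[p], IsRootOfUnity ε →
        P.eval (ε * ((p : AlgebraicClosure ℚ_[p]) ^ d)⁻¹) ≠ 0 →
        vq p d v a - k -
            (∑ i, if vq p d v (lam i) ≤ 1 then 1 - vq p d v (lam i) else 0) ≤
          vq p d v (P.eval (ε * ((p : AlgebraicClosure ℚ_[p]) ^ d)⁻¹))) ∧
    {ε : AlgebraicClosure ℚ_[p] | IsPrimeToRootOfUnity p ε ∧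
        ¬ (P.eval (ε * ((p : AlgebraicClosure ℚ_[p]) ^ d)⁻¹) ≠ 0 ∧
          vq p d v (P.eval (ε * ((p : AlgebraicClosure ℚ_[p]) ^ d)⁻¹)) =
            vq p d v a - k -
              (∑ i, if vq p d v (lam i) ≤ 1 then 1 - vq p d v (lam i) else 0))}.Finite ∧
    IsLeast {r : ℝ | ∃ ε : AlgebraicClosure ℚ_[p], IsRootOfUnity ε ∧
        P.eval (ε * ((p : AlgebraicClosure ℚ_[p]) ^ d)⁻¹) ≠ 0 ∧
        r = vq p d v (P.eval (ε * ((p : AlgebraicClosure ℚ_[p]) ^ d)⁻¹))}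
      (vq p d v a - k -
        (∑ i, if vq p d v (lam i) ≤ 1 then 1 - vq p d v (lam i) else 0)) :=
  padic_valuation_of_polynomial_at_roots_of_unity_general p d hd v hmul hna hext P a ha k N lam hlam
    hfact
end

section
/- Let λ ∈ K. Then: (i) for every root of unity ε ∈ K with 1 − λ·ε·q⁻¹ ≠ 0 one has v_q(1 − λ·ε·q⁻¹) ≥ min{0, v_q(λ) − 1} (where for λ = 0 the quantity v_q(λ) − 1 is interpreted as +∞, so the bound reads v_q(1 − 0) ≥ 0); and (ii) for all but finitely many roots of unity ε ∈ K of order coprime to p one has 1 − λ·ε·q⁻¹ ≠ 0 and v_q(1 − λ·ε·q⁻¹) = min{0, v_q(λ) − 1}. -/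
namespace AbsoluteValue

def ofIsNonarchimedean {F : Type*} [DivisionRing F] (f : F → ℝ)
    (map_mul : ∀ x y, f (x * y) = f x * f y) (hna : IsNonarchimedean f)
    (map_zero : f 0 = 0) (map_neg_one : f (-1) = 1) : AbsoluteValue F ℝ :=
  have map_neg (x : F) : f (-x) = f x := by
    rw [neg_eq_neg_one_mul, map_mul, map_neg_one, one_mul]
  have nonneg (x : F) : 0 ≤ f x := by simpa [map_zero, map_neg] using hna x (-x)
  have map_one : f 1 = 1 := by simpa [map_neg_one] using map_mul (-1) (-1)
  { toFun := f
    map_mul' := map_mul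
    nonneg' := nonneg
    eq_zero' := fun x => ⟨fun hx => by_contra fun hx0 => by
      simpa [hx0, map_one, hx] using map_mul x x⁻¹, fun hx => hx ▸ map_zero⟩
    add_le' := fun _ _ => hna.add_le nonneg }

theorem apply_eq_one_of_pow_eq_one {R : Type*} [Ring R] [Nontrivial R] {abv : AbsoluteValue R ℝ}
    {ε : R} {n : ℕ} (hn : n ≠ 0) (hε : ε ^ n = 1) : abv ε = 1 := by
  rw [← pow_eq_one_iff_of_nonneg (abv.nonneg ε) hn, ← abv.map_pow, hε, abv.map_one]

theorem apply_eq_one_of_pow_eq_one' {R : Type*} [Ring R] [Nontrivial R]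
    {abv : AbsoluteValue R ℝ} {ε : R} {N : ℕ} (hN : abv N = 1) (hε : ε ^ N = 1) : abv ε = 1 :=
  apply_eq_one_of_pow_eq_one (by rintro rfl; simp at hN) hε

end AbsoluteValue

namespace IsNonarchimedean

section Ring

variable {R : Type*} [Ring R] {abv : AbsoluteValue R ℝ}

theorem sub_le_max (hna : IsNonarchimedean abv) (x y : R) :
    abv (x - y) ≤ max (abv x) (abv y) := by
  simpa [sub_eq_add_neg, abv.map_neg] using hna x (-y)

variable [Nontrivial R]

theorem one_sub_le_max (hna : IsNonarchimedean abv) (x : R) : abv (1 - x) ≤ max 1 (abv x) :=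
  abv.map_one ▸ hna.sub_le_max 1 x

theorem one_sub_eq_max_of_ne (hna : IsNonarchimedean abv) {x : R} (hx : abv x ≠ 1) :
    abv (1 - x) = max 1 (abv x) := by
  rw [sub_eq_add_neg, hna.add_eq_max_of_ne (by rwa [abv.map_neg, abv.map_one, ne_comm]),
    abv.map_neg, abv.map_one]

theorem one_sub_lt_one_of_ne_max (hna : IsNonarchimedean abv) {x : R}
    (h : abv (1 - x) ≠ max 1 (abv x)) : abv x = 1 ∧ abv (1 - x) < 1 := by
  have hx : abv x = 1 := by_contra fun hx => h (hna.one_sub_eq_max_of_ne hx)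
  rw [hx, max_self] at h
  exact ⟨hx, lt_of_le_of_ne (by simpa [hx] using hna.one_sub_le_max x) h⟩

theorem geom_sum_le_one (hna : IsNonarchimedean abv) {ζ : R} (hζ : abv ζ ≤ 1) (n : ℕ) :
    abv (∑ i ∈ Finset.range n, ζ ^ i) ≤ 1 := by
  obtain ⟨i, -, hi⟩ := finset_image_add abv.map_zero abv.nonneg hna (ζ ^ ·) (Finset.range n)
  exact hi.trans (abv.map_pow ζ i ▸ pow_le_one₀ (abv.nonneg ζ) hζ)

theorem pow_sub_one_le (hna : IsNonarchimedean abv) {ζ : R} (hζ : abv ζ ≤ 1) (n : ℕ) :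
    abv (ζ ^ n - 1) ≤ abv (ζ - 1) := by
  rw [← geom_sum_mul, abv.map_mul]
  exact mul_le_of_le_one_left (abv.nonneg _) (hna.geom_sum_le_one hζ n)

/-- If `ζ ≡ 1`, then `∑_{i < N} ζ ^ i ≡ N` is a unit, so `ζ ^ N - 1 = (ζ - 1) ∑_{i < N} ζ ^ i`
vanishes only if `ζ = 1`. -/
theorem eq_one_of_pow_eq_one_of_sub_one_lt_one (hna : IsNonarchimedean abv) {ζ : R} {N : ℕ}
    (hN : abv N = 1) (hζN : ζ ^ N = 1) (hζ : abv (ζ - 1) < 1) : ζ = 1 := by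
  have hζ_le : abv ζ ≤ 1 := by
    simpa [abv.map_one, max_eq_right hζ.le] using hna (ζ - 1) 1
  have hsum_sub : abv (∑ i ∈ Finset.range N, ζ ^ i - N) < 1 := by
    obtain ⟨i, -, hi⟩ :=
      finset_image_add abv.map_zero abv.nonneg hna (ζ ^ · - 1) (Finset.range N)
    rw [show ∑ i ∈ Finset.range N, ζ ^ i - N = ∑ i ∈ Finset.range N, (ζ ^ i - 1) by simp]
    exact (hi.trans (hna.pow_sub_one_le hζ_le i)).trans_lt hζ
  have hsum : abv (∑ i ∈ Finset.range N, ζ ^ i) = 1 := by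
    rw [← add_sub_cancel (N : R) (∑ i ∈ Finset.range N, ζ ^ i),
      hna.add_eq_left_of_lt (hN ▸ hsum_sub), hN]
  have : abv (ζ - 1) = 0 := by
    simpa [hζN, abv.map_mul, hsum] using congrArg abv (geom_sum_mul ζ N)
  exact sub_eq_zero.mp (abv.eq_zero.mp this)

end Ring

variable {F : Type*} [Field F] {abv : AbsoluteValue F ℝ}

theorem eq_of_pow_eq_one_of_sub_lt_one (hna : IsNonarchimedean abv) {ε₁ ε₂ : F} {N₁ N₂ : ℕ}
    (hN₁ : abv N₁ = 1) (hN₂ : abv N₂ = 1) (h₁ : ε₁ ^ N₁ = 1) (h₂ : ε₂ ^ N₂ = 1)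
    (h : abv (ε₁ - ε₂) < 1) : ε₁ = ε₂ := by
  have hε₂ : abv ε₂ = 1 := abv.apply_eq_one_of_pow_eq_one' hN₂ h₂
  have hε₂0 : ε₂ ≠ 0 := abv.ne_zero_iff.mp (by simp [hε₂])
  refine (div_eq_one_iff_eq hε₂0).mp (hna.eq_one_of_pow_eq_one_of_sub_one_lt_one
    (N := N₁ * N₂) (by rw [Nat.cast_mul, abv.map_mul, hN₁, hN₂, one_mul]) ?_ ?_)
  · rw [div_pow, pow_mul, h₁, one_pow, mul_comm, pow_mul, h₂, one_pow, div_one]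
  · rwa [div_sub_one hε₂0, map_div₀, hε₂, div_one]

theorem subsingleton_setOf_one_sub_mul_ne_max (hna : IsNonarchimedean abv) (c : F) :
    {ε : F | (∃ N : ℕ, abv N = 1 ∧ ε ^ N = 1) ∧ abv (1 - c * ε) ≠ max 1 (abv c)}.Subsingleton := by
  have key {ε : F} {N : ℕ} (hN : abv N = 1) (hε : ε ^ N = 1)
      (h : abv (1 - c * ε) ≠ max 1 (abv c)) : abv c = 1 ∧ abv (1 - c * ε) < 1 := by
    have hcε : abv (c * ε) = abv c := by
      rw [abv.map_mul, abv.apply_eq_one_of_pow_eq_one' hN hε, mul_one]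
    rw [← hcε] at h ⊢
    exact hna.one_sub_lt_one_of_ne_max h
  rintro ε₁ ⟨⟨N₁, hN₁, h₁⟩, hne₁⟩ ε₂ ⟨⟨N₂, hN₂, h₂⟩, hne₂⟩
  obtain ⟨hc, hlt₁⟩ := key hN₁ h₁ hne₁
  obtain ⟨-, hlt₂⟩ := key hN₂ h₂ hne₂
  refine hna.eq_of_pow_eq_one_of_sub_lt_one hN₁ hN₂ h₁ h₂ ?_
  calc abv (ε₁ - ε₂) = abv ((1 - c * ε₂) - (1 - c * ε₁)) := by
        rw [← one_mul (abv (ε₁ - ε₂)), ← hc, ← abv.map_mul]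
        congr 1
        ring
    _ < 1 := (hna.sub_le_max ..).trans_lt (max_lt hlt₂ hlt₁)

end IsNonarchimedean

theorem neg_log_div_le_neg_log_div_iff {L a b : ℝ} (hL : 0 < L) (ha : 0 < a) (hb : 0 < b) :
    -Real.log a / L ≤ -Real.log b / L ↔ b ≤ a := by
  rw [div_le_div_iff_of_pos_right hL, neg_le_neg_iff, Real.log_le_log_iff hb ha]

section Padic

variable {p : ℕ} [Fact p.Prime]

theorem AbsoluteValue.apply_natCast_eq_norm_natCast {L : Type*} [Field L] [Algebra ℚ_[p] L]
    {abv : AbsoluteValue L ℝ} (hext : ∀ x : ℚ_[p], abv (algebraMap ℚ_[p] L x) = ‖x‖) (n : ℕ) :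
    abv n = ‖(n : ℚ_[p])‖ := by
  simpa using hext n

theorem log_prime_pow_pos {d : ℕ} (hd : 0 < d) : 0 < Real.log ((p : ℝ) ^ d) :=
  Real.log_pos (one_lt_pow₀ (Nat.one_lt_cast.mpr (Fact.out : p.Prime).one_lt) hd.ne')

theorem ite_min_vq_sub_one_eq {d : ℕ} (hd : 0 < d)
    (abv : AbsoluteValue (AlgebraicClosure ℚ_[p]) ℝ) (x : AlgebraicClosure ℚ_[p])
    [Decidable (x = 0)] :
    (if x = 0 then 0 else min 0 (vq p d abv x - 1)) =
      -Real.log (max 1 (abv x * p ^ d)) / Real.log (p ^ d) := by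
  have hL := log_prime_pow_pos (p := p) hd
  split_ifs with hx
  · simp [hx]
  have hq : (p : ℝ) ^ d ≠ 0 := pow_ne_zero d (Nat.cast_ne_zero.mpr (Fact.out : p.Prime).ne_zero)
  have : vq p d abv x - 1 = -Real.log (abv x * p ^ d) / Real.log (p ^ d) := by
    rw [vq, Real.log_mul (abv.ne_zero_iff.mpr hx) hq]
    field_simp
    ring
  rw [this]
  rcases le_total (abv x * p ^ d) 1 with h | h
  · rw [max_eq_left h, Real.log_one, neg_zero, zero_div, min_eq_left]
    exact div_nonneg (neg_nonneg.mpr (Real.log_nonpos (by positivity) h)) hL.le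
  · rw [max_eq_right h, min_eq_right]
    exact div_nonpos_of_nonpos_of_nonneg (neg_nonpos.mpr (Real.log_nonneg h)) hL.le

end Padic

open Classical in
theorem padic_valuation_of_linear_factor_at_roots_of_unity
    (p : ℕ) [Fact p.Prime] (d : ℕ) (hd : 0 < d)
    (v : AlgebraicClosure ℚ_[p] → ℝ)
    (hmul : ∀ x y, v (x * y) = v x * v y)
    (hna : ∀ x y, v (x + y) ≤ max (v x) (v y))
    (hext : ∀ x : ℚ_[p], v (algebraMap ℚ_[p] (AlgebraicClosure ℚ_[p]) x) = ‖x‖)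
    (lam : AlgebraicClosure ℚ_[p]) :
    (∀ ε : AlgebraicClosure ℚ_[p], IsRootOfUnity ε →
        1 - lam * ε * ((p : AlgebraicClosure ℚ_[p]) ^ d)⁻¹ ≠ 0 →
        (if lam = 0 then 0 else min 0 (vq p d v lam - 1)) ≤
          vq p d v (1 - lam * ε * ((p : AlgebraicClosure ℚ_[p]) ^ d)⁻¹)) ∧
    {ε : AlgebraicClosure ℚ_[p] | IsPrimeToRootOfUnity p ε ∧
        ¬ (1 - lam * ε * ((p : AlgebraicClosure ℚ_[p]) ^ d)⁻¹ ≠ 0 ∧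
          vq p d v (1 - lam * ε * ((p : AlgebraicClosure ℚ_[p]) ^ d)⁻¹) =
            (if lam = 0 then 0 else min 0 (vq p d v lam - 1)))}.Finite := by
  obtain ⟨abv, rfl⟩ : ∃ abv : AbsoluteValue (AlgebraicClosure ℚ_[p]) ℝ, ⇑abv = v :=
    ⟨.ofIsNonarchimedean v hmul hna (by simpa using hext 0) (by simpa using hext (-1)), rfl⟩
  replace hna : IsNonarchimedean abv := hna
  have hc : abv (lam * ((p : AlgebraicClosure ℚ_[p]) ^ d)⁻¹) = abv lam * p ^ d := by
    rw [abv.map_mul, map_inv₀, abv.map_pow, abv.apply_natCast_eq_norm_natCast hext, Padic.norm_p, inv_pow,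
      inv_inv]
  simp only [mul_right_comm lam _ ((p : AlgebraicClosure ℚ_[p]) ^ d)⁻¹, ite_min_vq_sub_one_eq hd,
    ← hc]
  set c := lam * ((p : AlgebraicClosure ℚ_[p]) ^ d)⁻¹
  have hmax : 0 < max 1 (abv c) := lt_max_of_lt_left one_pos
  refine ⟨fun ε ⟨m, hm, hεm⟩ hne => ?_, ?_⟩
  · rw [vq, neg_log_div_le_neg_log_div_iff (log_prime_pow_pos hd) hmax (abv.pos hne)]
    simpa [abv.map_mul, abv.apply_eq_one_of_pow_eq_one hm.ne' hεm] using hna.one_sub_le_max (c * ε)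
  refine (hna.subsingleton_setOf_one_sub_mul_ne_max c).finite.subset ?_
  rintro ε ⟨⟨m, -, hpm, hεm⟩, hexc⟩
  have hm : abv m = 1 := by
    rwa [abv.apply_natCast_eq_norm_natCast hext, Padic.norm_natCast_eq_one_iff,
      Nat.Prime.coprime_iff_not_dvd Fact.out]
  refine ⟨⟨m, hm, hεm⟩, fun h => hexc ⟨abv.ne_zero_iff.mp ?_, by rw [vq, h]⟩⟩
  exact h ▸ hmax.ne'
end

section
/- Let S be a finite set; for each x ∈ S let n_x be a positive integer, let a_x ∈ K satisfy ‖q^{n_x}·a_x‖ ≤ 1, and let α_x ∈ K be a root of unity. For ε ∈ K set G(ε) = ∏_{x∈S} (−1 + a_x·α_x·q^{n_x}·ε^{n_x} − α_x²·ε^{2·n_x}). Then ‖G(ε)‖ ≤ 1 for every root of unity ε ∈ K, and ‖G(ε)‖ = 1 for all but finitely many roots of unity ε ∈ K of order coprime to p. Equivalently, the minimum of v_q(G(ε)) over all roots of unity ε ∈ K equals 0. -/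
/-- The product `G(ε) = ∏_{x ∈ S} (−1 + a_x·α_x·q^{n_x}·ε^{n_x} − α_x²·ε^{2·n_x})`,
where `q = p ^ d`. -/
noncomputable def Gprod (p d : ℕ) [Fact p.Prime] {ι : Type*} (S : Finset ι) (n : ι → ℕ)
    (a α : ι → AlgebraicClosure ℚ_[p]) (ε : AlgebraicClosure ℚ_[p]) :
    AlgebraicClosure ℚ_[p] :=
  ∏ x ∈ S, (-1 + a x * α x * ((p : AlgebraicClosure ℚ_[p]) ^ d) ^ n x * ε ^ n x
    - α x ^ 2 * ε ^ (2 * n x))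

/-!
Write `c = q ^ n * a` and `u = α * ε ^ n`, so that each factor of `G(ε)` is `-1 + c u - u²`.
Because `|c| ≤ 1`, the roots `β, γ` of `X² - c X + 1` satisfy `βγ = 1` and are therefore both
units, and the factor equals `-(u - β)(u - γ)`; as `|u| = 1`, it has absolute value `≤ 1`.
Roots of unity of order `m` prime to `p` are pairwise at distance `1`, since `|m| = 1`; so for
each factor at most one value of `ε ^ n` comes within distance `< 1` of `β` (resp. `γ`), and only
finitely many prime-to-`p` roots of unity `ε` make a factor a non-unit. There are infinitely many
of them, so some `ε` has `|G(ε)| = 1`, i.e. `v_q(G(ε)) = 0`.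
-/

namespace AbsoluteValue

variable {F : Type*} [Field F] {f : AbsoluteValue F ℝ}

lemma apply_eq_one_of_isRootOfUnity {ζ : F} (h : IsRootOfUnity ζ) : f ζ = 1 :=
  let ⟨_, hm, hζ⟩ := h
  (pow_eq_one_iff_of_nonneg (f.nonneg ζ) hm.ne').mp (by rw [← map_pow, hζ, map_one])

lemma apply_sub_le_max (hf : IsNonarchimedean f) (x y : F) : f (x - y) ≤ max (f x) (f y) := by
  simpa [sub_eq_add_neg] using hf x (-y)

lemma apply_pow_sub_one_le (hf : IsNonarchimedean f) {ζ : F} (hζ : f ζ ≤ 1) (i : ℕ) :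
    f (ζ ^ i - 1) ≤ f (ζ - 1) := by
  have hgeom : f (∑ j ∈ Finset.range i, ζ ^ j) ≤ 1 := by
    obtain ⟨j, -, hj⟩ := IsNonarchimedean.finset_image_add (map_zero f) f.nonneg hf
      (fun j => ζ ^ j) (Finset.range i)
    exact hj.trans (by rw [map_pow]; exact pow_le_one₀ (f.nonneg ζ) hζ)
  rw [← geom_sum_mul, map_mul]
  exact mul_le_of_le_one_left (f.nonneg _) hgeom

/-- `m = ∑_{i<m} (1 - ζ ^ i)` and every summand is divisible by `ζ - 1`. -/
lemma apply_sub_one_eq_one_of_pow_eq_one (hf : IsNonarchimedean f) {ζ : F} {m : ℕ}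
    (hζm : ζ ^ m = 1) (hm : f m = 1) (hζ : ζ ≠ 1) : f (ζ - 1) = 1 := by
  have hm0 : m ≠ 0 := by rintro rfl; simp at hm
  have hζ1 : f ζ = 1 := apply_eq_one_of_isRootOfUnity ⟨m, Nat.pos_of_ne_zero hm0, hζm⟩
  have hsum : (m : F) = -∑ i ∈ Finset.range m, (ζ ^ i - 1) := by
    have hgeom : ∑ i ∈ Finset.range m, ζ ^ i = 0 :=
      (mul_eq_zero.mp (by rw [geom_sum_mul, hζm, sub_self])).resolve_right (sub_ne_zero.mpr hζ)
    simp [Finset.sum_sub_distrib, hgeom]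
  have hge : 1 ≤ f (ζ - 1) := by
    obtain ⟨i, -, hi⟩ := IsNonarchimedean.finset_image_add (map_zero f) f.nonneg hf
      (fun i => ζ ^ i - 1) (Finset.range m)
    calc 1 = f m := hm.symm
      _ ≤ f (ζ ^ i - 1) := by rw [hsum, map_neg_eq_map]; exact hi
      _ ≤ f (ζ - 1) := apply_pow_sub_one_le hf hζ1.le i
  have hle : f (ζ - 1) ≤ 1 := by
    simpa [hζ1] using apply_sub_le_max hf ζ 1
  exact le_antisymm hle hge

lemma apply_sub_eq_one_of_pow_eq_one (hf : IsNonarchimedean f) {ζ₁ ζ₂ : F} {m : ℕ}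
    (h₁ : ζ₁ ^ m = 1) (h₂ : ζ₂ ^ m = 1) (hm : f m = 1) (hne : ζ₁ ≠ ζ₂) : f (ζ₁ - ζ₂) = 1 := by
  have hm0 : m ≠ 0 := by rintro rfl; simp at hm
  have hζ₂ : ζ₂ ≠ 0 := by rintro rfl; simp [hm0] at h₂
  have hquot : ζ₁ / ζ₂ ≠ 1 := fun h => hne ((div_eq_one_iff_eq hζ₂).mp h)
  have hsplit : ζ₁ - ζ₂ = ζ₂ * (ζ₁ / ζ₂ - 1) := by field_simp
  rw [hsplit, map_mul, apply_eq_one_of_isRootOfUnity ⟨m, Nat.pos_of_ne_zero hm0, h₂⟩, one_mul]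
  exact apply_sub_one_eq_one_of_pow_eq_one hf (by rw [div_pow, h₁, h₂, div_one]) hm hquot

lemma subsingleton_setOf_apply_sub_lt_one (hf : IsNonarchimedean f) {T : Set F}
    (hT : T.Pairwise fun x y => 1 ≤ f (x - y)) (β : F) :
    {z ∈ T | f (z - β) < 1}.Subsingleton := by
  rintro z₁ ⟨hz₁, h₁⟩ z₂ ⟨hz₂, h₂⟩
  by_contra hne
  have hlt : f (z₁ - z₂) < 1 := by
    calc f (z₁ - z₂) = f ((z₁ - β) - (z₂ - β)) := by ring_nf
      _ ≤ max (f (z₁ - β)) (f (z₂ - β)) := apply_sub_le_max hf _ _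
      _ < 1 := max_lt h₁ h₂
  exact (hT hz₁ hz₂ hne).not_gt hlt

lemma apply_eq_one_of_mul_eq_one_of_apply_add_le_one (hf : IsNonarchimedean f) {β γ : F}
    (hβγ : β * γ = 1) (h : f (β + γ) ≤ 1) : f β = 1 := by
  have hprod : f β * f γ = 1 := by rw [← map_mul, hβγ, map_one]
  by_contra hβ
  have hne : f β ≠ f γ := fun heq => hβ <| by
    rw [← heq] at hprod
    exact (pow_eq_one_iff_of_nonneg (f.nonneg β) two_ne_zero).mp (by rw [sq, hprod])
  rw [IsNonarchimedean.add_eq_max_of_ne hf hne] at h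
  have := f.nonneg β
  have := f.nonneg γ
  rcases lt_or_gt_of_ne hβ with hlt | hgt
  · nlinarith [le_max_right (f β) (f γ)]
  · linarith [le_max_left (f β) (f γ)]

open Polynomial in
lemma exists_factorization_of_apply_le_one [IsAlgClosed F] (hf : IsNonarchimedean f) {c : F}
    (hc : f c ≤ 1) :
    ∃ β γ : F, f β = 1 ∧ f γ = 1 ∧ ∀ u : F, -1 + c * u - u ^ 2 = -((u - β) * (u - γ)) := by
  obtain ⟨β, hβ⟩ := IsAlgClosed.exists_root (X ^ 2 - C c * X + 1 : F[X])
    (by rw [show (X ^ 2 - C c * X + 1 : F[X]).degree = 2 by compute_degree!]; decide)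
  have hβ : β ^ 2 - c * β + 1 = 0 := by simpa using hβ
  have hβγ : β * (c - β) = 1 := by linear_combination -hβ
  refine ⟨β, c - β, ?_, ?_, fun u => by linear_combination -hβ⟩
  · exact apply_eq_one_of_mul_eq_one_of_apply_add_le_one hf hβγ (by simpa using hc)
  · exact apply_eq_one_of_mul_eq_one_of_apply_add_le_one hf (by rw [mul_comm, hβγ])
      (by simpa using hc)

lemma apply_neg_one_add_mul_sub_sq_le_one (hf : IsNonarchimedean f) {c u : F} (hc : f c ≤ 1)
    (hu : f u ≤ 1) : f (-1 + c * u - u ^ 2) ≤ 1 := by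
  have hcu : f (c * u) ≤ 1 := by rw [map_mul]; exact mul_le_one₀ hc (f.nonneg u) hu
  have hu2 : f (u ^ 2) ≤ 1 := by rw [map_pow]; exact pow_le_one₀ (f.nonneg u) hu
  calc f (-1 + c * u - u ^ 2) ≤ max (max (f (-1)) (f (c * u))) (f (u ^ 2)) :=
        (apply_sub_le_max hf _ _).trans (max_le_max_right _ (hf _ _))
    _ ≤ 1 := max_le (max_le (by simp) hcu) hu2

end AbsoluteValue

namespace IsPrimeToRootOfUnity

variable {M : Type*} [Monoid M] {p : ℕ} {ζ : M}

lemma isRootOfUnity_s3 (h : IsPrimeToRootOfUnity p ζ) : IsRootOfUnity ζ :=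
  let ⟨m, hm, _, hζ⟩ := h; ⟨m, hm, hζ⟩

lemma pow (h : IsPrimeToRootOfUnity p ζ) (k : ℕ) : IsPrimeToRootOfUnity p (ζ ^ k) :=
  let ⟨m, hm, hpm, hζ⟩ := h; ⟨m, hm, hpm, by rw [← pow_mul, mul_comm, pow_mul, hζ, one_pow]⟩

end IsPrimeToRootOfUnity

section PrimeToRootsOfUnity

variable {F : Type*} [Field F] {f : AbsoluteValue F ℝ} {p : ℕ}

open AbsoluteValue

lemma pairwise_one_le_apply_sub_of_isPrimeToRootOfUnity (hp : p.Prime)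
    (hf : IsNonarchimedean f) (hfp : ∀ m : ℕ, ¬ p ∣ m → f m = 1) :
    {ζ : F | IsPrimeToRootOfUnity p ζ}.Pairwise fun x y => 1 ≤ f (x - y) := by
  rintro ζ₁ ⟨m₁, -, hpm₁, h₁⟩ ζ₂ ⟨m₂, -, hpm₂, h₂⟩ hne
  have hpm : ¬ p ∣ m₁ * m₂ := fun h => (hp.dvd_mul.mp h).elim hpm₁ hpm₂
  refine (apply_sub_eq_one_of_pow_eq_one hf ?_ ?_ (hfp _ hpm) hne).ge
  · rw [pow_mul, h₁, one_pow]
  · rw [mul_comm, pow_mul, h₂, one_pow]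

open Polynomial in
lemma finite_setOf_pow_mem {n : ℕ} (hn : 0 < n) {Z : Set F} (hZ : Z.Finite) :
    {ε : F | ε ^ n ∈ Z}.Finite := by
  classical
  exact hZ.preimage' fun z _ => (nthRoots n z).toFinset.finite_toSet.subset fun ε hε => by
    simpa [mem_nthRoots hn] using hε

lemma finite_setOf_apply_mul_pow_sub_lt_one (hp : p.Prime) (hf : IsNonarchimedean f)
    (hfp : ∀ m : ℕ, ¬ p ∣ m → f m = 1) {u : F} (hu : f u = 1) {n : ℕ} (hn : 0 < n) (β : F) :
    {ε : F | IsPrimeToRootOfUnity p ε ∧ f (u * ε ^ n - β) < 1}.Finite := by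
  have hu0 : u ≠ 0 := by rintro rfl; simp at hu
  have hnear := (subsingleton_setOf_apply_sub_lt_one hf
    (pairwise_one_le_apply_sub_of_isPrimeToRootOfUnity hp hf hfp) (β / u)).finite
  refine (finite_setOf_pow_mem hn hnear).subset fun ε ⟨hε, hlt⟩ => ⟨hε.pow n, ?_⟩
  rwa [show u * ε ^ n - β = u * (ε ^ n - β / u) by field_simp, map_mul, hu, one_mul] at hlt

lemma finite_setOf_apply_neg_one_add_mul_sub_sq_ne_one [IsAlgClosed F] (hp : p.Prime)
    (hf : IsNonarchimedean f) (hfp : ∀ m : ℕ, ¬ p ∣ m → f m = 1) {c u : F} (hc : f c ≤ 1)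
    (hu : f u = 1) {n : ℕ} (hn : 0 < n) :
    {ε : F | IsPrimeToRootOfUnity p ε ∧
      f (-1 + c * (u * ε ^ n) - (u * ε ^ n) ^ 2) ≠ 1}.Finite := by
  obtain ⟨β, γ, hβ, hγ, hfac⟩ := exists_factorization_of_apply_le_one hf hc
  refine ((finite_setOf_apply_mul_pow_sub_lt_one hp hf hfp hu hn β).union
    (finite_setOf_apply_mul_pow_sub_lt_one hp hf hfp hu hn γ)).subset ?_
  rintro ε ⟨hε, hne⟩
  have hw : f (u * ε ^ n) = 1 := by
    rw [map_mul, map_pow, hu, apply_eq_one_of_isRootOfUnity hε.isRootOfUnity_s3, one_pow, one_mul]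
  have hβle : f (u * ε ^ n - β) ≤ 1 := by simpa [hw, hβ] using apply_sub_le_max hf (u * ε ^ n) β
  have hγle : f (u * ε ^ n - γ) ≤ 1 := by simpa [hw, hγ] using apply_sub_le_max hf (u * ε ^ n) γ
  rw [hfac, map_neg_eq_map, map_mul] at hne
  by_contra hfar
  simp only [Set.mem_union, Set.mem_ofPred_eq, not_or, not_and, not_lt] at hfar
  exact hne (by rw [le_antisymm hβle (hfar.1 hε), le_antisymm hγle (hfar.2 hε), one_mul])

lemma infinite_setOf_isPrimeToRootOfUnity [IsAlgClosed F] [CharZero F] (hp : 1 < p) :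
    {ε : F | IsPrimeToRootOfUnity p ε}.Infinite := by
  have hroot (k : ℕ) : ∃ ε : F, IsPrimitiveRoot ε (k * p + 1) :=
    HasEnoughRootsOfUnity.exists_primitiveRoot F (k * p + 1)
  choose ζ hζ using hroot
  refine Set.infinite_of_injective_forall_mem (f := ζ) (fun k₁ k₂ h => ?_) fun k => ?_
  · have := (hζ k₁).eq_orderOf.trans ((congrArg orderOf h).trans (hζ k₂).eq_orderOf.symm)
    exact Nat.eq_of_mul_eq_mul_right (by omega) (Nat.add_right_cancel this)
  · refine ⟨k * p + 1, Nat.succ_pos _, fun hdvd => ?_, (hζ k).pow_eq_one⟩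
    have := Nat.dvd_one.mp ((Nat.dvd_add_right (dvd_mul_left p k)).mp hdvd)
    omega

end PrimeToRootsOfUnity

lemma IsAlgClosed.nonneg_of_map_mul {F : Type*} [Field F] [IsAlgClosed F] {v : F → ℝ}
    (hmul : ∀ x y, v (x * y) = v x * v y) (x : F) : 0 ≤ v x := by
  obtain ⟨y, rfl⟩ := IsAlgClosed.exists_pow_nat_eq x two_pos
  rw [sq, hmul]
  exact mul_self_nonneg _

def AbsoluteValue.ofIsNonarchimedean_s3 {F : Type*} [Field F] [IsAlgClosed F] (v : F → ℝ)
    (h0 : v 0 = 0) (h1 : v 1 = 1) (hmul : ∀ x y, v (x * y) = v x * v y)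
    (hna : IsNonarchimedean v) : AbsoluteValue F ℝ where
  toFun := v
  map_mul' := hmul
  nonneg' := IsAlgClosed.nonneg_of_map_mul hmul
  eq_zero' x := ⟨fun hx => by_contra fun hne => by
    simpa [hmul, hx, h1] using congrArg v (mul_inv_cancel₀ hne), fun hx => hx ▸ h0⟩
  add_le' _ _ := IsNonarchimedean.add_le (IsAlgClosed.nonneg_of_map_mul hmul) hna

lemma apply_natCast_eq_one_of_not_dvd {p : ℕ} [Fact p.Prime] {L : Type*} [Field L]
    [Algebra ℚ_[p] L] {v : L → ℝ} (hext : ∀ x : ℚ_[p], v (algebraMap ℚ_[p] L x) = ‖x‖)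
    {m : ℕ} (hm : ¬ p ∣ m) : v m = 1 := by
  rw [← map_natCast (algebraMap ℚ_[p] L), hext, Padic.norm_natCast_eq_one_iff]
  exact (Nat.Prime.coprime_iff_not_dvd Fact.out).mpr hm

section Valuation

variable {p d : ℕ} [Fact p.Prime] {v : AlgebraicClosure ℚ_[p] → ℝ} {x : AlgebraicClosure ℚ_[p]}

lemma vq_nonneg (h0 : 0 ≤ v x) (h1 : v x ≤ 1) : 0 ≤ vq p d v x :=
  div_nonneg (neg_nonneg.mpr (Real.log_nonpos h0 h1))
    (Real.log_nonneg (one_le_pow₀ (by exact_mod_cast (Fact.out : p.Prime).one_le)))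

lemma vq_eq_zero_of_eq_one (h : v x = 1) : vq p d v x = 0 := by
  simp [vq, h]

end Valuation

lemma Gprod_eq_prod (p d : ℕ) [Fact p.Prime] {ι : Type*} (S : Finset ι) (n : ι → ℕ)
    (a α : ι → AlgebraicClosure ℚ_[p]) (ε : AlgebraicClosure ℚ_[p]) :
    Gprod p d S n a α ε = ∏ x ∈ S, (-1 + ((p : AlgebraicClosure ℚ_[p]) ^ d) ^ n x * a x *
      (α x * ε ^ n x) - (α x * ε ^ n x) ^ 2) :=
  Finset.prod_congr rfl fun _ _ => by ring

theorem padic_norm_of_Gprod_at_roots_of_unity_general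
    (p : ℕ) [Fact p.Prime] (d : ℕ)
    (v : AlgebraicClosure ℚ_[p] → ℝ)
    (hmul : ∀ x y, v (x * y) = v x * v y)
    (hna : ∀ x y, v (x + y) ≤ max (v x) (v y))
    (hext : ∀ x : ℚ_[p], v (algebraMap ℚ_[p] (AlgebraicClosure ℚ_[p]) x) = ‖x‖)
    {ι : Type*} (S : Finset ι) (n : ι → ℕ) (hn : ∀ x ∈ S, 0 < n x)
    (a α : ι → AlgebraicClosure ℚ_[p])
    (ha : ∀ x ∈ S, v (((p : AlgebraicClosure ℚ_[p]) ^ d) ^ n x * a x) ≤ 1)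
    (hα : ∀ x ∈ S, IsRootOfUnity (α x)) :
    (∀ ε : AlgebraicClosure ℚ_[p], IsRootOfUnity ε → v (Gprod p d S n a α ε) ≤ 1) ∧
    {ε : AlgebraicClosure ℚ_[p] | IsPrimeToRootOfUnity p ε ∧
        v (Gprod p d S n a α ε) ≠ 1}.Finite ∧
    -- equivalently: the minimum of `v_q(G(ε))` over all roots of unity `ε` equals `0`
    IsLeast {r : ℝ | ∃ ε : AlgebraicClosure ℚ_[p], IsRootOfUnity ε ∧
        Gprod p d S n a α ε ≠ 0 ∧ r = vq p d v (Gprod p d S n a α ε)} 0 := by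
  have h0 : v 0 = 0 := by simpa using hext 0
  set f := AbsoluteValue.ofIsNonarchimedean_s3 v h0 (by simpa using hext 1) hmul hna
  have hf : IsNonarchimedean f := hna
  have hfp (m : ℕ) (hm : ¬ p ∣ m) : f m = 1 := apply_natCast_eq_one_of_not_dvd hext hm
  have hfα (x) (hx : x ∈ S) : f (α x) = 1 :=
    AbsoluteValue.apply_eq_one_of_isRootOfUnity (hα x hx)
  have hbound (ε) (hε : IsRootOfUnity ε) : f (Gprod p d S n a α ε) ≤ 1 := by
    rw [Gprod_eq_prod, AbsoluteValue.map_prod]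
    refine Finset.prod_le_one (fun _ _ => f.nonneg _) fun x hx =>
      AbsoluteValue.apply_neg_one_add_mul_sub_sq_le_one hf (ha x hx) ?_
    rw [map_mul, map_pow, hfα x hx, AbsoluteValue.apply_eq_one_of_isRootOfUnity hε, one_pow,
      one_mul]
  have hfinite : {ε | IsPrimeToRootOfUnity p ε ∧ f (Gprod p d S n a α ε) ≠ 1}.Finite := by
    refine (S.finite_toSet.biUnion fun x hx =>
      finite_setOf_apply_neg_one_add_mul_sub_sq_ne_one Fact.out hf hfp (ha x hx) (hfα x hx)
        (hn x hx)).subset ?_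
    rintro ε ⟨hε, hne⟩
    rw [Gprod_eq_prod, AbsoluteValue.map_prod] at hne
    obtain ⟨x, hx, hx1⟩ := Finset.exists_ne_one_of_prod_ne_one hne
    exact Set.mem_biUnion hx ⟨hε, hx1⟩
  obtain ⟨ε, hε, hgood⟩ :=
    ((infinite_setOf_isPrimeToRootOfUnity (Fact.out : p.Prime).one_lt).sdiff hfinite).nonempty
  have hε1 : f (Gprod p d S n a α ε) = 1 := not_not.mp fun h => hgood ⟨hε, h⟩
  refine ⟨hbound, hfinite, ⟨ε, hε.isRootOfUnity_s3, fun h => ?_, (vq_eq_zero_of_eq_one hε1).symm⟩, ?_⟩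
  · simp [h] at hε1
  · rintro r ⟨ε, hε, -, rfl⟩
    exact vq_nonneg (f.nonneg _) (hbound ε hε)

theorem padic_norm_of_Gprod_at_roots_of_unity
    (p : ℕ) [Fact p.Prime] (d : ℕ) (hd : 0 < d)
    (v : AlgebraicClosure ℚ_[p] → ℝ)
    (hmul : ∀ x y, v (x * y) = v x * v y)
    (hna : ∀ x y, v (x + y) ≤ max (v x) (v y))
    (hext : ∀ x : ℚ_[p], v (algebraMap ℚ_[p] (AlgebraicClosure ℚ_[p]) x) = ‖x‖)
    {ι : Type*} (S : Finset ι) (n : ι → ℕ) (hn : ∀ x ∈ S, 0 < n x)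
    (a α : ι → AlgebraicClosure ℚ_[p])
    (ha : ∀ x ∈ S, v (((p : AlgebraicClosure ℚ_[p]) ^ d) ^ n x * a x) ≤ 1)
    (hα : ∀ x ∈ S, IsRootOfUnity (α x)) :
    (∀ ε : AlgebraicClosure ℚ_[p], IsRootOfUnity ε → v (Gprod p d S n a α ε) ≤ 1) ∧
    {ε : AlgebraicClosure ℚ_[p] | IsPrimeToRootOfUnity p ε ∧
        v (Gprod p d S n a α ε) ≠ 1}.Finite ∧
    -- equivalently: the minimum of `v_q(G(ε))` over all roots of unity `ε` equals `0`
    IsLeast {r : ℝ | ∃ ε : AlgebraicClosure ℚ_[p], IsRootOfUnity ε ∧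
        Gprod p d S n a α ε ≠ 0 ∧ r = vq p d v (Gprod p d S n a α ε)} 0 :=
  padic_norm_of_Gprod_at_roots_of_unity_general p d v hmul hna hext S n hn a α ha hα
end

section
/- Let K be a field of characteristic p > 0 and let W be a Weierstrass curve over K with discriminant Δ(W) ≠ 0, whose j-invariant satisfies j(W) ≠ 0, j(W) ≠ 1728, and j(W) is a p-th power in K (i.e. j(W) = μ^p for some μ ∈ K). Then there exists a Weierstrass curve W′ over K with Δ(W′) ≠ 0 such that W is isomorphic over K to the Frobenius twist W′^{(p)} of W′; that is, there is an admissible change of Weierstrass variables over K carrying the curve obtained from W′ by applying x ↦ x^p to its coefficients onto W. -/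
/-- The `j`-invariant of a Weierstrass curve (meaningful when `Δ ≠ 0`). -/
noncomputable def WeierstrassCurve.jInv {K : Type*} [Field K] (W : WeierstrassCurve K) : K :=
  W.c₄ ^ 3 / W.Δ

/-!
A curve with `j ≠ 0, 1728` is determined by `j` up to a twist, and its twists are classified by
`Kˣ / Kˣ²` (quadratic twists, `p` odd) or `K / ℘(K)` (Artin–Schreier twists, `p = 2`), on which
`x ↦ x ^ p` acts trivially. Concretely, in normal form `W` is the twist by some `d` of a curve whose
coefficients are rational functions of `j = μ ^ p`, hence `p`-th powers; the Frobenius twist of the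
same construction with `μ` in place of `j` is the twist by `d ^ p`, which is isomorphic to the
twist by `d`.
-/

open MulAction

namespace WeierstrassCurve

section JInvariant

variable {K : Type*} [Field K] (W : WeierstrassCurve K)

lemma jInv_eq_j [W.IsElliptic] : W.jInv = W.j := by
  rw [jInv, j, Units.val_inv_eq_inv_val, coe_Δ', div_eq_inv_mul]

lemma Δ_ne_zero_of_jInv_ne_zero (h : W.jInv ≠ 0) : W.Δ ≠ 0 :=
  fun hΔ ↦ h (by rw [jInv, hΔ, div_zero])

end JInvariant

lemma Δ_ne_zero_of_smul_map_eq {R S : Type*} [CommRing R] [CommRing S] {f : R →+* S}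
    {W' : WeierstrassCurve R} {W : WeierstrassCurve S} {C : VariableChange S}
    (h : C • W'.map f = W) (hΔ : W.Δ ≠ 0) : W'.Δ ≠ 0 := by
  rintro hΔ'
  rw [← h, variableChange_Δ, map_Δ, hΔ', map_zero, mul_zero] at hΔ
  exact hΔ rfl

section QuadraticTwist

variable {R : Type*} [CommRing R]

/-- The quadratic twist `d y² = x³ + a₂ x² + a₄ x + a₆`, made monic by `(x, y) ↦ (d x, d² y)`;
the coefficients `a₁`, `a₃` of `W` are ignored. -/
def quadraticTwist (W : WeierstrassCurve R) (d : R) : WeierstrassCurve R :=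
  ⟨0, d * W.a₂, 0, d ^ 2 * W.a₄, d ^ 3 * W.a₆⟩

lemma map_quadraticTwist {S : Type*} [CommRing S] (f : R →+* S) (W : WeierstrassCurve R)
    (d : R) : (W.quadraticTwist d).map f = (W.map f).quadraticTwist (f d) := by
  ext <;> simp [quadraticTwist]

lemma smul_quadraticTwist (W : WeierstrassCurve R) (d : R) (u : Rˣ) :
    (⟨u, 0, 0, 0⟩ : VariableChange R) • W.quadraticTwist d =
      W.quadraticTwist (↑u⁻¹ ^ 2 * d) := by
  ext <;> simp only [quadraticTwist, variableChange_a₁, variableChange_a₂, variableChange_a₃,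
    variableChange_a₄, variableChange_a₆] <;> ring

/-- For odd `p`, Frobenius multiplies the twisting parameter `d` by the square `d ^ (p - 1)`. -/
lemma mem_orbit_map_frobenius_quadraticTwist (p : ℕ) [ExpChar R p] (hp : Odd p)
    (W : WeierstrassCurve R) {d : R} (hd : IsUnit d) :
    (W.map (frobenius R p)).quadraticTwist d ∈
      orbit (VariableChange R) ((W.quadraticTwist d).map (frobenius R p)) := by
  obtain ⟨k, rfl⟩ := hp
  refine ⟨⟨hd.unit ^ k, 0, 0, 0⟩, ?_⟩
  have hunit : (↑hd.unit⁻¹ : R) * d = 1 := hd.val_inv_mul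
  dsimp only
  rw [map_quadraticTwist, smul_quadraticTwist, frobenius_def]
  congr 1
  push_cast
  calc (↑hd.unit⁻¹ ^ k) ^ 2 * d ^ (2 * k + 1) = (↑hd.unit⁻¹ * d) ^ (2 * k) * d := by ring
    _ = d := by rw [hunit, one_pow, one_mul]

end QuadraticTwist

variable {K : Type*} [Field K]

section CharTwo

variable [CharP K 2]

/-- The substitution `y ↦ y + s x` adds `s + s ^ 2` to `a₂`; for `s = a₂` it turns `a₂ ^ 2` into
`a₂` in characteristic `2`. -/
lemma mem_orbit_map_frobenius_of_isCharTwoJNeZeroNF (W : WeierstrassCurve K) [W.IsElliptic]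
    [W.IsCharTwoJNeZeroNF] {μ : K} (hμ : W.j = μ ^ 2) :
    W ∈ orbit (VariableChange K)
      ((⟨1, W.a₂, 0, 0, μ⁻¹⟩ : WeierstrassCurve K).map (frobenius K 2)) := by
  have ha₆ : W.a₆ = μ⁻¹ ^ 2 := by
    rw [j_of_isCharTwoJNeZeroNF_of_char_two, one_div] at hμ
    rw [← inv_inv W.a₆, hμ, inv_pow]
  refine ⟨⟨1, 0, W.a₂, 0⟩, ?_⟩
  ext <;> simp only [variableChange_a₁, variableChange_a₂, variableChange_a₃, variableChange_a₄,
    variableChange_a₆, map_a₁, map_a₂, map_a₃, map_a₄, map_a₆, frobenius_def,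
    a₁_of_isCharTwoJNeZeroNF, a₃_of_isCharTwoJNeZeroNF, a₄_of_isCharTwoJNeZeroNF, ha₆,
    inv_one, Units.val_one, map_one, map_zero]
  · linear_combination W.a₂ * CharP.cast_eq_zero K 2
  · linear_combination (-W.a₂) * CharP.cast_eq_zero K 2
  all_goals ring

lemma exists_mem_orbit_map_frobenius_of_char_two (W : WeierstrassCurve K) [W.IsElliptic]
    (hj : W.j ≠ 0) {μ : K} (hμ : W.j = μ ^ 2) :
    ∃ W' : WeierstrassCurve K, W ∈ orbit (VariableChange K) (W'.map (frobenius K 2)) := by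
  obtain ⟨D, hD⟩ := W.exists_variableChange_isCharTwoNF
  rw [← variableChange_j W D] at hj hμ
  cases hD with
  | of_j_eq_zero => exact absurd (j_of_isCharTwoJEqZeroNF_of_char_two _) hj
  | of_j_ne_zero =>
    exact ⟨_, orbit_eq_iff.2 (mem_orbit_map_frobenius_of_isCharTwoJNeZeroNF _ hμ) ▸
      mem_orbit_smul D W⟩

end CharTwo

section CharThree

variable [CharP K 3]

lemma mem_orbit_map_frobenius_of_isCharThreeJNeZeroNF (W : WeierstrassCurve K) [W.IsElliptic]
    [W.IsCharThreeJNeZeroNF] {μ : K} (hμ : W.j = μ ^ 3) :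
    W ∈ orbit (VariableChange K)
      (((⟨0, 1, 0, 0, -μ⁻¹⟩ : WeierstrassCurve K).quadraticTwist W.a₂).map (frobenius K 3)) := by
  have hΔ := W.Δ'.ne_zero
  rw [coe_Δ', Δ_of_isCharThreeJNeZeroNF_of_char_three] at hΔ
  have ha₂ : W.a₂ ≠ 0 := fun h ↦ hΔ (by rw [h]; ring)
  have ha₆ : W.a₆ ≠ 0 := right_ne_zero_of_mul hΔ
  rw [j_of_isCharThreeJNeZeroNF_of_char_three, div_eq_iff ha₆] at hμ
  have hμ0 : μ ≠ 0 := by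
    rintro rfl
    exact ha₂ ((pow_eq_zero_iff three_ne_zero).1 (by linear_combination -hμ))
  convert mem_orbit_map_frobenius_quadraticTwist 3 (by decide) _ ha₂.isUnit using 1
  ext <;> simp only [quadraticTwist, map_a₂, map_a₄, map_a₆, frobenius_def,
    a₁_of_isCharThreeJNeZeroNF, a₃_of_isCharThreeJNeZeroNF, a₄_of_isCharThreeJNeZeroNF,
    map_zero, map_one]
  · ring
  · ring
  · rw [neg_pow, inv_pow]
    field_simp
    linear_combination -hμ

lemma exists_mem_orbit_map_frobenius_of_char_three (W : WeierstrassCurve K) [W.IsElliptic]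
    (hj : W.j ≠ 0) {μ : K} (hμ : W.j = μ ^ 3) :
    ∃ W' : WeierstrassCurve K, W ∈ orbit (VariableChange K) (W'.map (frobenius K 3)) := by
  obtain ⟨D, hD⟩ := W.exists_variableChange_isCharThreeNF
  rw [← variableChange_j W D] at hj hμ
  cases hD with
  | of_j_ne_zero =>
    exact ⟨_, orbit_eq_iff.2 (mem_orbit_map_frobenius_of_isCharThreeJNeZeroNF _ hμ) ▸
      mem_orbit_smul D W⟩
  | of_j_eq_zero => exact absurd (j_of_isShortNF_of_char_three _) hj

end CharThree

section CharNeTwoThree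

/-- `W` is the quadratic twist by `a₆ / a₄` of `y² = x³ + t x + t` with `t = a₄ ³ / a₆ ²`, and
`t = 27 j / (4 (1728 - j))` is a `p`-th power together with `j`. -/
lemma mem_orbit_map_frobenius_of_isShortNF (p : ℕ) [ExpChar K p] (hp : Odd p) (h2 : (2 : K) ≠ 0)
    (W : WeierstrassCurve K) [W.IsElliptic] [W.IsShortNF] (hj0 : W.j ≠ 0) (hj1728 : W.j ≠ 1728)
    {μ : K} (hμ : W.j = μ ^ p) :
    W ∈ orbit (VariableChange K)
      (((⟨0, 0, 0, 27 * μ / (4 * (1728 - μ)), 27 * μ / (4 * (1728 - μ))⟩ : WeierstrassCurve K)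
        |>.quadraticTwist (W.a₆ / W.a₄)).map (frobenius K p)) := by
  have hΔ := W.Δ'.ne_zero
  rw [coe_Δ', Δ_of_isShortNF] at hΔ
  have hj := W.j_of_isShortNF
  rw [eq_div_iff (right_ne_zero_of_mul hΔ)] at hj
  have h4 : (4 : K) ≠ 0 := (show (2 * 2 : K) = 4 by norm_num) ▸ mul_ne_zero h2 h2
  have ha₄ : W.a₄ ≠ 0 := fun h ↦
    hj0 <| (mul_eq_zero.1 (by rw [hj, h]; ring)).resolve_right (right_ne_zero_of_mul hΔ)
  have ha₆ : W.a₆ ≠ 0 := fun h ↦ hj1728 <| by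
    refine mul_left_cancel₀ (mul_ne_zero h4 (pow_ne_zero 3 ha₄)) ?_
    rw [h] at hj
    linear_combination hj
  have h1728 : (4 : K) * (1728 - W.j) ≠ 0 := mul_ne_zero h4 (sub_ne_zero.2 hj1728.symm)
  have ht : (27 * μ / (4 * (1728 - μ))) ^ p = W.a₄ ^ 3 / W.a₆ ^ 2 := by
    rw [← frobenius_def, map_div₀, map_mul, map_mul, map_sub, map_ofNat, map_ofNat, map_ofNat,
      frobenius_def, ← hμ, div_eq_div_iff h1728 (pow_ne_zero 2 ha₆)]
    linear_combination hj
  convert mem_orbit_map_frobenius_quadraticTwist p hp _ (div_ne_zero ha₆ ha₄).isUnit using 1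
  ext <;> simp only [quadraticTwist, map_a₂, map_a₄, map_a₆, frobenius_def, ht,
    a₁_of_isShortNF, a₂_of_isShortNF, a₃_of_isShortNF, map_zero, mul_zero]
  · field_simp
  · field_simp

lemma exists_mem_orbit_map_frobenius_of_two_ne_zero_of_three_ne_zero (p : ℕ) [ExpChar K p]
    (hp : Odd p) (h2 : (2 : K) ≠ 0) (h3 : (3 : K) ≠ 0) (W : WeierstrassCurve K) [W.IsElliptic]
    (hj0 : W.j ≠ 0) (hj1728 : W.j ≠ 1728) {μ : K} (hμ : W.j = μ ^ p) :
    ∃ W' : WeierstrassCurve K, W ∈ orbit (VariableChange K) (W'.map (frobenius K p)) := by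
  have := invertibleOfNonzero h2
  have := invertibleOfNonzero h3
  rw [← variableChange_j W W.toShortNF] at hj0 hj1728 hμ
  exact ⟨_, orbit_eq_iff.2 (mem_orbit_map_frobenius_of_isShortNF p hp h2 _ hj0 hj1728 hμ) ▸
    mem_orbit_smul _ W⟩

end CharNeTwoThree

end WeierstrassCurve

theorem isomorphic_to_frobenius_twist_of_j_pth_power_general
    (p : ℕ) [Fact p.Prime] (K : Type*) [Field K] [CharP K p]
    (W : WeierstrassCurve K)
    (hj0 : W.jInv ≠ 0) (hj1728 : W.jInv ≠ 1728)
    (hjp : ∃ μ : K, W.jInv = μ ^ p) :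
    ∃ W' : WeierstrassCurve K, W'.Δ ≠ 0 ∧
      ∃ C : WeierstrassCurve.VariableChange K,
        C • (W'.map (frobenius K p)) = W := by
  obtain ⟨μ, hμ⟩ := hjp
  have hΔ := W.Δ_ne_zero_of_jInv_ne_zero hj0
  have : W.IsElliptic := ⟨hΔ.isUnit⟩
  rw [W.jInv_eq_j] at hj0 hj1728 hμ
  obtain ⟨W', C, hC⟩ : ∃ W' : WeierstrassCurve K,
      W ∈ orbit (WeierstrassCurve.VariableChange K) (W'.map (frobenius K p)) := by
    rcases eq_or_ne p 2 with rfl | hp2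
    · exact W.exists_mem_orbit_map_frobenius_of_char_two hj0 hμ
    rcases eq_or_ne p 3 with rfl | hp3
    · exact W.exists_mem_orbit_map_frobenius_of_char_three hj0 hμ
    have h2 : (2 : K) ≠ 0 := by
      exact_mod_cast CharP.cast_ne_zero_of_ne_of_prime K Nat.prime_two hp2
    have h3 : (3 : K) ≠ 0 := by
      exact_mod_cast CharP.cast_ne_zero_of_ne_of_prime K Nat.prime_three hp3
    exact W.exists_mem_orbit_map_frobenius_of_two_ne_zero_of_three_ne_zero p
      ((Fact.out : p.Prime).odd_of_ne_two hp2) h2 h3 hj0 hj1728 hμ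
  exact ⟨W', WeierstrassCurve.Δ_ne_zero_of_smul_map_eq hC hΔ, C, hC⟩

/-- If `W` is a Weierstrass curve over a field `K` of characteristic `p` with nonzero
discriminant, whose `j`-invariant is different from `0` and `1728` and is a `p`-th power
in `K`, then `W` is isomorphic over `K` to the Frobenius twist of a Weierstrass curve `W'`
over `K` with nonzero discriminant. -/
theorem isomorphic_to_frobenius_twist_of_j_pth_power
    (p : ℕ) [Fact p.Prime] (K : Type*) [Field K] [CharP K p]
    (W : WeierstrassCurve K) (hΔ : W.Δ ≠ 0)
    (hj0 : W.jInv ≠ 0) (hj1728 : W.jInv ≠ 1728)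
    (hjp : ∃ μ : K, W.jInv = μ ^ p) :
    ∃ W' : WeierstrassCurve K, W'.Δ ≠ 0 ∧
      ∃ C : WeierstrassCurve.VariableChange K,
        C • (W'.map (frobenius K p)) = W :=
  isomorphic_to_frobenius_twist_of_j_pth_power_general p K W hj0 hj1728 hjp
end

section
/- Let n be a positive integer with n dividing p − 1 and 6 dividing n, and set t = (p−1)/n and F = ZMod p. Let ι : F → O/𝔪 be the unique ring homomorphism of the prime field F into the residue field, and let ω : Fˣ → Kˣ be a group homomorphism such that for every x ∈ Fˣ the element ω(x) lies in O and its image in O/𝔪 equals ι(x) (the Teichmüller character). Let ψ : F → K be a nontrivial additive character. Then for every integer k with 1 ≤ k ≤ n/6 − 1, the product of Gauss sums g(ω^{−3kt}, ψ) · g(ω^{6kt}, ψ) · g(ω^{−2kt}, ψ) · g(ω^{−kt}, ψ) has absolute value 1/p; equivalently, the Jacobi sum J = p⁻¹ · g(ω^{−3kt}, ψ) · g(ω^{6kt}, ψ) · g(ω^{−2kt}, ψ) · g(ω^{−kt}, ψ) satisfies ‖J‖ = 1. -/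
/-- A multiplicative nonarchimedean absolute value on the algebraic closure of `ℚ_[p]`
extending the standard `p`-adic absolute value. -/
structure PadicAbsVal (p : ℕ) [Fact p.Prime] where
  v : AlgebraicClosure ℚ_[p] → ℝ
  v_mul : ∀ x y, v (x * y) = v x * v y
  v_nonarch : ∀ x y, v (x + y) ≤ max (v x) (v y)
  v_ext : ∀ x : ℚ_[p], v (algebraMap ℚ_[p] (AlgebraicClosure ℚ_[p]) x) = ‖x‖

namespace PadicAbsVal

variable {p : ℕ} [Fact p.Prime] (A : PadicAbsVal p)

lemma v_zero : A.v 0 = 0 := by simpa using A.v_ext 0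

lemma v_one : A.v 1 = 1 := by simpa using A.v_ext 1

lemma v_nonneg (x : AlgebraicClosure ℚ_[p]) : 0 ≤ A.v x := by
  obtain ⟨y, hy⟩ := IsAlgClosed.exists_pow_nat_eq x (n := 2) two_pos
  have h : A.v x = A.v y * A.v y := by rw [← hy, pow_two, A.v_mul]
  rw [h]; exact mul_self_nonneg _

lemma v_neg (x : AlgebraicClosure ℚ_[p]) : A.v (-x) = A.v x := by
  have h1 : A.v (-1) = 1 := by simpa using A.v_ext (-1)
  rw [← neg_one_mul, A.v_mul, h1, one_mul]

/-- The valuation ring `O = {x : ‖x‖ ≤ 1}` of the absolute value. -/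
def O : Subring (AlgebraicClosure ℚ_[p]) where
  carrier := {x | A.v x ≤ 1}
  mul_mem' := fun {a b} ha hb => by
    simp only [Set.mem_setOf_eq] at *
    rw [A.v_mul]
    simpa using mul_le_mul ha hb (A.v_nonneg b) zero_le_one
  one_mem' := le_of_eq A.v_one
  add_mem' := fun {a b} ha hb => (A.v_nonarch a b).trans (max_le ha hb)
  zero_mem' := by simp only [Set.mem_setOf_eq, A.v_zero]; exact zero_le_one
  neg_mem' := fun {a} ha => by simpa only [Set.mem_setOf_eq, A.v_neg] using ha

/-- The maximal ideal `𝔪 = {x : ‖x‖ < 1}` of the valuation ring. -/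
def mIdeal : Ideal A.O where
  carrier := {x | A.v (x : AlgebraicClosure ℚ_[p]) < 1}
  add_mem' := fun {a b} ha hb => by
    simp only [Set.mem_setOf_eq] at *
    exact lt_of_le_of_lt (A.v_nonarch a b) (max_lt ha hb)
  zero_mem' := by
    simp only [Set.mem_setOf_eq]
    rw [show ((0 : A.O) : AlgebraicClosure ℚ_[p]) = 0 from rfl, A.v_zero]
    exact zero_lt_one
  smul_mem' := fun c x hx => by
    simp only [Set.mem_setOf_eq, smul_eq_mul] at *
    rw [show ((c * x : A.O) : AlgebraicClosure ℚ_[p]) = (c : AlgebraicClosure ℚ_[p]) * x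
      from rfl, A.v_mul]
    exact lt_of_le_of_lt (mul_le_of_le_one_left (A.v_nonneg _) c.2) hx

end PadicAbsVal

/-- The Gauss sum `g(ω^e, ψ) = −∑_{x ∈ 𝔽_pˣ} ω(x)^e·ψ(x)` attached to an integer power of
a multiplicative character `ω` of `𝔽_pˣ` and an additive character `ψ` of `𝔽_p`. -/
noncomputable def gaussSumPow (p : ℕ) [Fact p.Prime]
    (ω : (ZMod p)ˣ →* (AlgebraicClosure ℚ_[p])ˣ)
    (ψ : AddChar (ZMod p) (AlgebraicClosure ℚ_[p])) (e : ℤ) : AlgebraicClosure ℚ_[p] :=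
  -∑ x : (ZMod p)ˣ, ((ω x ^ e : (AlgebraicClosure ℚ_[p])ˣ) : AlgebraicClosure ℚ_[p]) *
    ψ (x : ZMod p)

/-! Write `χ` for the Teichmüller character and `a = k t`. The characters `χ^{-3a} χ^{6a} = χ^{3a}`
and `χ^{-2a} χ^{-a} = χ^{-3a}` are nontrivial, so `g(α) g(β) = g(αβ) J(α, β)` turns the product
into `J(χ^{-3a}, χ^{6a}) J(χ^{-2a}, χ^{-a}) g(χ^{3a}) g(χ^{-3a})`, and the last two factors give
`χ^{3a}(-1) p`. Both Jacobi sums are units: modulo `𝔪` the sum `J(χ^{m₁}, χ^{m₂})` reduces to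
`∑ x^{m₁} (1 - x)^{m₂} = -(-1)^i (m₂ choose i)` with `i = p - 1 - m₁`, which is nonzero in `𝔽_p`
as soon as `i ≤ m₂ < p`. -/

open Finset

section FiniteField

variable {F : Type*} [Field F] [Fintype F]

theorem FiniteField.sum_pow_of_ne_zero {e : ℕ} (he : e ≠ 0) :
    ∑ x : F, x ^ e = if Fintype.card F - 1 ∣ e then -1 else 0 := by
  classical
  rw [← FiniteField.sum_pow_units]
  refine (Fintype.sum_of_injective Units.val Units.val_injective _ _ (fun x hx => ?_)
    fun _ => rfl).symm
  have hx0 : x = 0 := by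
    by_contra h
    exact hx ⟨Units.mk0 x h, rfl⟩
  rw [hx0, zero_pow he]

theorem FiniteField.sum_pow_mul_one_sub_pow {m₁ m₂ : ℕ} (h₁ : m₁ ≠ 0)
    (h₁q : m₁ ≤ Fintype.card F - 1) (h₂q : m₂ < Fintype.card F - 1) :
    ∑ x : F, x ^ m₁ * (1 - x) ^ m₂ =
      -(-1) ^ (Fintype.card F - 1 - m₁) * m₂.choose (Fintype.card F - 1 - m₁) := by
  set q := Fintype.card F
  calc ∑ x : F, x ^ m₁ * (1 - x) ^ m₂
      = ∑ x : F, ∑ j ∈ range (m₂ + 1), (-1) ^ j * m₂.choose j * x ^ (m₁ + j) := by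
        refine sum_congr rfl fun x _ => ?_
        rw [← neg_add_eq_sub, add_pow, mul_sum]
        refine sum_congr rfl fun j _ => ?_
        rw [neg_pow, one_pow, pow_add]
        ring
    _ = ∑ j ∈ range (m₂ + 1), (-1) ^ j * m₂.choose j * ∑ x : F, x ^ (m₁ + j) := by
        rw [sum_comm]
        simp_rw [mul_sum]
    _ = (-1) ^ (q - 1 - m₁) * m₂.choose (q - 1 - m₁) * -1 := by
        rw [sum_eq_single (q - 1 - m₁)]
        · rw [sum_pow_of_ne_zero (by omega), if_pos (by rw [Nat.add_sub_cancel' h₁q])]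
        · intro j hj hji
          rw [mem_range] at hj
          rw [sum_pow_of_ne_zero (by omega), if_neg, mul_zero]
          intro hdvd
          have := Nat.eq_of_dvd_of_lt_two_mul (by omega) hdvd (by omega)
          omega
        · intro hi
          rw [mem_range] at hi
          rw [Nat.choose_eq_zero_of_lt (by omega)]
          simp
    _ = _ := by ring

end FiniteField

theorem ZMod.sum_pow_mul_one_sub_pow_ne_zero {p : ℕ} [Fact p.Prime] {m₁ m₂ : ℕ} (h₁ : m₁ ≠ 0)
    (h₁p : m₁ ≤ p - 1) (h₂p : m₂ < p - 1) (h : p - 1 ≤ m₁ + m₂) :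
    ∑ x : ZMod p, x ^ m₁ * (1 - x) ^ m₂ ≠ 0 := by
  rw [FiniteField.sum_pow_mul_one_sub_pow h₁ (by rwa [ZMod.card]) (by rwa [ZMod.card]),
    ZMod.card]
  have hchoose : (m₂.choose (p - 1 - m₁) : ZMod p) ≠ 0 := by
    rw [Ne, ZMod.natCast_eq_zero_iff]
    exact (Nat.Prime.coprime_iff_not_dvd Fact.out).mp
      (Nat.Prime.coprime_choose_of_lt Fact.out (by omega) (by omega))
  simpa using hchoose

section GaussSum

variable {F R : Type*} [Field F] [Fintype F] [CommRing R] [IsDomain R]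

theorem gaussSum_mul_gaussSum_inv {φ : MulChar F R} (hφ : φ ≠ 1) {ψ : AddChar F R}
    (hψ : ψ.IsPrimitive) : gaussSum φ ψ * gaussSum φ⁻¹ ψ = φ (-1) * Fintype.card F := by
  rw [← mul_gaussSum_inv_eq_gaussSum φ⁻¹, mul_left_comm, gaussSum_mul_gaussSum_eq_card hφ hψ,
    MulChar.inv_apply', inv_neg_one]

theorem gaussSum_mul_gaussSum_mul_gaussSum_mul_gaussSum {α β γ δ φ : MulChar F R}
    (hαβ : α * β = φ) (hγδ : γ * δ = φ⁻¹) (hφ : φ ≠ 1) {ψ : AddChar F R} (hψ : ψ.IsPrimitive) :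
    gaussSum α ψ * gaussSum β ψ * (gaussSum γ ψ * gaussSum δ ψ) =
      jacobiSum α β * jacobiSum γ δ * (φ (-1) * Fintype.card F) := by
  rw [← jacobiSum_mul_nontrivial (hαβ ▸ hφ), ← jacobiSum_mul_nontrivial (hγδ ▸ inv_ne_one.mpr hφ),
    hαβ, hγδ, ← gaussSum_mul_gaussSum_inv hφ hψ]
  ring

end GaussSum

theorem gaussSumPow_eq_neg_gaussSum {p : ℕ} [Fact p.Prime]
    (ω : (ZMod p)ˣ →* (AlgebraicClosure ℚ_[p])ˣ) (ψ : AddChar (ZMod p) (AlgebraicClosure ℚ_[p]))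
    (e : ℤ) : gaussSumPow p ω ψ e = -gaussSum (MulChar.ofUnitHom ω ^ e) ψ := by
  rw [gaussSumPow, gaussSum]
  congr 1
  refine Fintype.sum_of_injective Units.val Units.val_injective _ _ (fun x hx => ?_) fun u => ?_
  · rw [MulChar.map_nonunit _ hx, zero_mul]
  · have : MulChar.ofUnitHom ω ^ e = MulChar.ofUnitHom (ω ^ e) :=
      (map_zpow MulChar.mulEquivToUnitHom.symm ω e).symm
    rw [this, MulChar.ofUnitHom_coe, MonoidHom.zpow_apply]

namespace PadicAbsVal

variable {p : ℕ} [Fact p.Prime] (A : PadicAbsVal p)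

local notation "K" => AlgebraicClosure ℚ_[p]

theorem v_pow (x : K) (m : ℕ) : A.v (x ^ m) = A.v x ^ m := by
  induction m with
  | zero => simpa using A.v_one
  | succ m ih => rw [pow_succ, pow_succ, A.v_mul, ih]

theorem v_inv (x : K) : A.v x⁻¹ = (A.v x)⁻¹ := by
  rcases eq_or_ne x 0 with rfl | hx
  · rw [inv_zero, A.v_zero, inv_zero]
  · refine eq_inv_of_mul_eq_one_left ?_
    rw [← A.v_mul, inv_mul_cancel₀ hx, A.v_one]

theorem v_natCast_self : A.v (p : K) = (p : ℝ)⁻¹ := by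
  rw [← map_natCast (algebraMap ℚ_[p] K), A.v_ext, Padic.norm_p]

theorem v_eq_one_of_pow_eq_one {x : K} {n : ℕ} (hn : n ≠ 0) (hx : x ^ n = 1) : A.v x = 1 := by
  refine (pow_eq_one_iff_of_nonneg (A.v_nonneg x) hn).mp ?_
  rw [← A.v_pow, hx, A.v_one]

theorem mIdeal_ne_top : A.mIdeal ≠ ⊤ := by
  rw [Ne, Ideal.eq_top_iff_one]
  intro h
  have h1 : A.v ((1 : A.O) : K) < 1 := h
  rw [OneMemClass.coe_one, A.v_one] at h1
  exact lt_irrefl _ h1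

instance : Nontrivial (A.O ⧸ A.mIdeal) := Ideal.Quotient.nontrivial_iff.mpr A.mIdeal_ne_top

theorem v_eq_one_of_mk_ne_zero (x : A.O) (hx : Ideal.Quotient.mk A.mIdeal x ≠ 0) :
    A.v x = 1 :=
  le_antisymm x.2 <| not_lt.mp fun h => hx (Ideal.Quotient.eq_zero_iff_mem.mpr h)

end PadicAbsVal

section Teichmuller

variable {p : ℕ} [Fact p.Prime] {A : PadicAbsVal p}

local notation "K" => AlgebraicClosure ℚ_[p]

def IsTeichmuller (ι : ZMod p →+* A.O ⧸ A.mIdeal) (ω : (ZMod p)ˣ →* Kˣ) : Prop :=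
  ∀ x : (ZMod p)ˣ, ∃ h : (ω x : K) ∈ A.O, Ideal.Quotient.mk A.mIdeal ⟨ω x, h⟩ = ι x

namespace IsTeichmuller

variable {ι : ZMod p →+* A.O ⧸ A.mIdeal} {ω : (ZMod p)ˣ →* (AlgebraicClosure ℚ_[p])ˣ}
  {ψ : AddChar (ZMod p) (AlgebraicClosure ℚ_[p])}

theorem injective (hω : IsTeichmuller ι ω) : Function.Injective ω := by
  intro x y hxy
  obtain ⟨hx, hιx⟩ := hω x
  obtain ⟨hy, hιy⟩ := hω y
  refine Units.ext (ι.injective ?_)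
  rw [← hιx, ← hιy]
  simp_rw [hxy]

theorem apply_mem (hω : IsTeichmuller ι ω) (x : ZMod p) : MulChar.ofUnitHom ω x ∈ A.O := by
  by_cases hx : IsUnit x
  · obtain ⟨u, rfl⟩ := hx
    rw [MulChar.ofUnitHom_coe]
    exact (hω u).1
  · rw [MulChar.map_nonunit _ hx]
    exact zero_mem _

theorem mk_apply (hω : IsTeichmuller ι ω) (x : ZMod p) :
    Ideal.Quotient.mk A.mIdeal ⟨MulChar.ofUnitHom ω x, hω.apply_mem x⟩ = ι x := by
  by_cases hx : IsUnit x
  · obtain ⟨u, rfl⟩ := hx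
    simp_rw [MulChar.ofUnitHom_coe]
    exact (hω u).2
  · have hx0 : x = 0 := by simpa using hx
    subst hx0
    simp_rw [MulChar.map_zero]
    exact (map_zero _).trans (map_zero ι).symm

theorem pow_ne_one (hω : IsTeichmuller ι ω) {m : ℕ} (hm : m ≠ 0) (hmp : m < p - 1) :
    MulChar.ofUnitHom ω ^ m ≠ 1 := by
  intro h
  have hpow : ∀ u : (ZMod p)ˣ, u ^ m = 1 := fun u => hω.injective <| Units.ext <| by
    have := congrArg (· (u : ZMod p)) h
    simpa [MulChar.pow_apply_coe, MulChar.ofUnitHom_coe] using this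
  have hdvd := Monoid.exponent_dvd_of_forall_pow_eq_one hpow
  rw [IsCyclic.exponent_eq_card, Nat.card_eq_fintype_card, ZMod.card_units] at hdvd
  exact absurd (Nat.le_of_dvd (Nat.pos_of_ne_zero hm) hdvd) (by omega)

theorem v_jacobiSum_pow (hω : IsTeichmuller ι ω) {m₁ m₂ : ℕ} (h₁ : m₁ ≠ 0) (h₂ : m₂ ≠ 0)
    (h₁p : m₁ ≤ p - 1) (h₂p : m₂ < p - 1) (h : p - 1 ≤ m₁ + m₂) :
    A.v (jacobiSum (MulChar.ofUnitHom ω ^ m₁) (MulChar.ofUnitHom ω ^ m₂)) = 1 := by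
  let lift (x : ZMod p) : A.O := ⟨MulChar.ofUnitHom ω x, hω.apply_mem x⟩
  have hJ : jacobiSum (MulChar.ofUnitHom ω ^ m₁) (MulChar.ofUnitHom ω ^ m₂) =
      ((∑ x, lift x ^ m₁ * lift (1 - x) ^ m₂ : A.O) : K) := by
    simp [jacobiSum, MulChar.pow_apply' _ h₁, MulChar.pow_apply' _ h₂, lift]
  have hmk : Ideal.Quotient.mk A.mIdeal (∑ x, lift x ^ m₁ * lift (1 - x) ^ m₂) =
      ι (∑ x : ZMod p, x ^ m₁ * (1 - x) ^ m₂) := by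
    simp only [map_sum, map_mul, map_pow, lift, hω.mk_apply]
  rw [hJ]
  refine A.v_eq_one_of_mk_ne_zero _ ?_
  rw [hmk, map_ne_zero_iff ι ι.injective]
  exact ZMod.sum_pow_mul_one_sub_pow_ne_zero h₁ h₁p h₂p h

theorem gaussSumPow_mul_eq (hω : IsTeichmuller ι ω) (hψ : ψ.IsPrimitive) {a : ℕ}
    (ha : a ≠ 0) (hap : 6 * a < p - 1) :
    gaussSumPow p ω ψ (-((3 * a : ℕ) : ℤ)) * gaussSumPow p ω ψ ((6 * a : ℕ) : ℤ) *
        gaussSumPow p ω ψ (-((2 * a : ℕ) : ℤ)) * gaussSumPow p ω ψ (-(a : ℤ)) =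
      jacobiSum (MulChar.ofUnitHom ω ^ (p - 1 - 3 * a)) (MulChar.ofUnitHom ω ^ (6 * a)) *
        jacobiSum (MulChar.ofUnitHom ω ^ (p - 1 - 2 * a)) (MulChar.ofUnitHom ω ^ (p - 1 - a)) *
        ((MulChar.ofUnitHom ω ^ (3 * a)) (-1) * p) := by
  set χ := MulChar.ofUnitHom ω
  have inv_pow_eq : ∀ m ≤ p - 1, (χ ^ m)⁻¹ = χ ^ (p - 1 - m) := fun m hm => by
    refine inv_eq_of_mul_eq_one_left ?_
    rw [← pow_add, Nat.sub_add_cancel hm, ← ZMod.card_units p, MulChar.pow_card_eq_one]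
  have hαβ : (χ ^ (3 * a))⁻¹ * χ ^ (6 * a) = χ ^ (3 * a) := by
    rw [show 6 * a = 3 * a + 3 * a by ring, pow_add, inv_mul_cancel_left]
  have hγδ : (χ ^ (2 * a))⁻¹ * (χ ^ a)⁻¹ = (χ ^ (3 * a))⁻¹ := by
    rw [← mul_inv, ← pow_add, show 2 * a + a = 3 * a by ring]
  simp only [gaussSumPow_eq_neg_gaussSum, zpow_neg, zpow_natCast]
  rw [show ∀ x y z w : AlgebraicClosure ℚ_[p], -x * -y * -z * -w = x * y * (z * w) by
      intros; ring,
    gaussSum_mul_gaussSum_mul_gaussSum_mul_gaussSum hαβ hγδ (hω.pow_ne_one (by omega) (by omega))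
      hψ, inv_pow_eq _ (by omega), inv_pow_eq _ (by omega), inv_pow_eq _ (by omega), ZMod.card]

theorem v_gaussSumPow_mul (hω : IsTeichmuller ι ω) (hψ : ψ.IsPrimitive) {a : ℕ}
    (ha : a ≠ 0) (hap : 6 * a < p - 1) :
    A.v (gaussSumPow p ω ψ (-((3 * a : ℕ) : ℤ)) * gaussSumPow p ω ψ ((6 * a : ℕ) : ℤ) *
      gaussSumPow p ω ψ (-((2 * a : ℕ) : ℤ)) * gaussSumPow p ω ψ (-(a : ℤ))) = (p : ℝ)⁻¹ := by
  have hsign : ((MulChar.ofUnitHom ω ^ (3 * a)) (-1)) ^ 2 = 1 := by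
    rw [← map_pow, neg_one_sq, map_one]
  rw [hω.gaussSumPow_mul_eq hψ ha hap, A.v_mul, A.v_mul, A.v_mul,
    hω.v_jacobiSum_pow (by omega) (by omega) (by omega) (by omega) (by omega),
    hω.v_jacobiSum_pow (by omega) (by omega) (by omega) (by omega) (by omega),
    A.v_eq_one_of_pow_eq_one two_ne_zero hsign, A.v_natCast_self, one_mul, one_mul, one_mul]

end IsTeichmuller

end Teichmuller

theorem jacobi_sum_of_ulmer_curve_is_unit_general
    (p : ℕ) [Fact p.Prime] (n : ℕ)
    (t : ℕ) (ht : n * t = p - 1) (A : PadicAbsVal p)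
    (ι : ZMod p →+* A.O ⧸ A.mIdeal)
    (ω : (ZMod p)ˣ →* (AlgebraicClosure ℚ_[p])ˣ)
    (hω : ∀ x : (ZMod p)ˣ,
      ∃ h : ((ω x : (AlgebraicClosure ℚ_[p])ˣ) : AlgebraicClosure ℚ_[p]) ∈ A.O,
      Ideal.Quotient.mk A.mIdeal ⟨((ω x : (AlgebraicClosure ℚ_[p])ˣ) :
        AlgebraicClosure ℚ_[p]), h⟩ = ι x)
    (ψ : AddChar (ZMod p) (AlgebraicClosure ℚ_[p])) (hψ : ∃ a, ψ a ≠ 1)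
    (k : ℕ) (hk1 : 1 ≤ k) (hk2 : k ≤ n / 6 - 1) :
    A.v (gaussSumPow p ω ψ (-((3 * k * t : ℕ) : ℤ)) *
        gaussSumPow p ω ψ ((6 * k * t : ℕ) : ℤ) *
        gaussSumPow p ω ψ (-((2 * k * t : ℕ) : ℤ)) *
        gaussSumPow p ω ψ (-((k * t : ℕ) : ℤ))) = 1 / (p : ℝ) ∧
    A.v (((p : AlgebraicClosure ℚ_[p]))⁻¹ *
        (gaussSumPow p ω ψ (-((3 * k * t : ℕ) : ℤ)) *
          gaussSumPow p ω ψ ((6 * k * t : ℕ) : ℤ) *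
          gaussSumPow p ω ψ (-((2 * k * t : ℕ) : ℤ)) *
          gaussSumPow p ω ψ (-((k * t : ℕ) : ℤ)))) = 1 := by
  have hψ_primitive : ψ.IsPrimitive := AddChar.IsPrimitive.of_ne_one fun h => by
    obtain ⟨a, ha⟩ := hψ
    exact ha (by rw [h, AddChar.one_apply])
  have ht0 : t ≠ 0 := by
    rintro rfl
    have := (Fact.out : p.Prime).two_le
    omega
  have hkt : 6 * (k * t) < p - 1 := by
    have : 6 * (k + 1) ≤ n := by omega
    nlinarith [Nat.pos_of_ne_zero ht0]
  have hprod :=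
    IsTeichmuller.v_gaussSumPow_mul hω hψ_primitive (Nat.mul_ne_zero (by omega) ht0) hkt
  rw [mul_assoc 3 k t, mul_assoc 6 k t, mul_assoc 2 k t]
  refine ⟨by rw [hprod, one_div], ?_⟩
  rw [A.v_mul, hprod, A.v_inv, A.v_natCast_self, inv_inv, mul_inv_cancel₀]
  exact Nat.cast_ne_zero.mpr (Fact.out : p.Prime).ne_zero

/-- If `6 ∣ n`, `n ∣ p − 1`, `t = (p−1)/n`, `ω` is the Teichmüller character of `𝔽_pˣ` and
`ψ` a nontrivial additive character of `𝔽_p`, then for `1 ≤ k ≤ n/6 − 1` the product of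
Gauss sums `g(ω^{−3kt})·g(ω^{6kt})·g(ω^{−2kt})·g(ω^{−kt})` has absolute value `1/p`;
equivalently, the corresponding Jacobi sum `J` satisfies `‖J‖ = 1`. -/
theorem jacobi_sum_of_ulmer_curve_is_unit
    (p : ℕ) [Fact p.Prime] (n : ℕ) (hn : 0 < n) (hn6 : 6 ∣ n) (hnp : n ∣ p - 1)
    (t : ℕ) (ht : n * t = p - 1) (A : PadicAbsVal p)
    (ι : ZMod p →+* A.O ⧸ A.mIdeal)
    (ω : (ZMod p)ˣ →* (AlgebraicClosure ℚ_[p])ˣ)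
    (hω : ∀ x : (ZMod p)ˣ,
      ∃ h : ((ω x : (AlgebraicClosure ℚ_[p])ˣ) : AlgebraicClosure ℚ_[p]) ∈ A.O,
      Ideal.Quotient.mk A.mIdeal ⟨((ω x : (AlgebraicClosure ℚ_[p])ˣ) :
        AlgebraicClosure ℚ_[p]), h⟩ = ι x)
    (ψ : AddChar (ZMod p) (AlgebraicClosure ℚ_[p])) (hψ : ∃ a, ψ a ≠ 1)
    (k : ℕ) (hk1 : 1 ≤ k) (hk2 : k ≤ n / 6 - 1) :
    A.v (gaussSumPow p ω ψ (-((3 * k * t : ℕ) : ℤ)) *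
        gaussSumPow p ω ψ ((6 * k * t : ℕ) : ℤ) *
        gaussSumPow p ω ψ (-((2 * k * t : ℕ) : ℤ)) *
        gaussSumPow p ω ψ (-((k * t : ℕ) : ℤ))) = 1 / (p : ℝ) ∧
    A.v (((p : AlgebraicClosure ℚ_[p]))⁻¹ *
        (gaussSumPow p ω ψ (-((3 * k * t : ℕ) : ℤ)) *
          gaussSumPow p ω ψ ((6 * k * t : ℕ) : ℤ) *
          gaussSumPow p ω ψ (-((2 * k * t : ℕ) : ℤ)) *
          gaussSumPow p ω ψ (-((k * t : ℕ) : ℤ)))) = 1 :=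
  jacobi_sum_of_ulmer_curve_is_unit_general p n t ht A ι ω hω ψ hψ k hk1 hk2
end

section
/- Let F be a finite field of characteristic p and let n be a positive integer with p ∤ n. Let W be the Weierstrass curve over the rational function field RatFunc F defined by the equation y² + x·y = x³ − Tⁿ, i.e. with coefficients a₁ = 1, a₂ = a₃ = a₄ = 0, a₆ = −Tⁿ, where T denotes the variable of RatFunc F. Then the discriminant of W equals Tⁿ·(1 − 432·Tⁿ), which is nonzero (so W is an elliptic curve); the j-invariant of W equals (Tⁿ·(1 − 432·Tⁿ))⁻¹; and the j-invariant of W does not lie in the image of the constant field F in RatFunc F (so the elliptic curve is not isotrivial). -/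
/-- The elliptic curve `y² + x·y = x³ − Tⁿ` over `F(T)` has discriminant
`Tⁿ·(1 − 432·Tⁿ) ≠ 0`, has `j`-invariant `(Tⁿ·(1 − 432·Tⁿ))⁻¹`, and is not isotrivial:
its `j`-invariant is not a constant rational function. -/
theorem ulmer_curve_discriminant_j_invariant_not_isotrivial
    (p : ℕ) [Fact p.Prime] (F : Type*) [Field F] [Fintype F] [CharP F p]
    (n : ℕ) (hn : 0 < n) (hpn : ¬ p ∣ n)
    (W : WeierstrassCurve (RatFunc F))
    (hW : W = { a₁ := 1, a₂ := 0, a₃ := 0, a₄ := 0, a₆ := -(RatFunc.X ^ n) }) :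
    W.Δ = RatFunc.X ^ n * (1 - 432 * RatFunc.X ^ n) ∧
    W.Δ ≠ 0 ∧
    W.jInv = (RatFunc.X ^ n * (1 - 432 * RatFunc.X ^ n))⁻¹ ∧
    ∀ c : F, W.jInv ≠ RatFunc.C c := by
  subst hW
  have hinj := RatFunc.algebraMap_injective F
  set φ := algebraMap (Polynomial F) (RatFunc F) with hφ
  have hXalg : (RatFunc.X : RatFunc F) = φ Polynomial.X := (RatFunc.algebraMap_X).symm
  have hkey : (RatFunc.X : RatFunc F) ^ n * (1 - 432 * RatFunc.X ^ n)
      = φ (Polynomial.X ^ n * (1 - 432 * Polynomial.X ^ n)) := by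
    push_cast [map_mul, map_sub, map_pow, map_one, map_ofNat, hXalg]
    ring
  have hΔ : ({ a₁ := 1, a₂ := 0, a₃ := 0, a₄ := 0, a₆ := -(RatFunc.X ^ n) } : WeierstrassCurve (RatFunc F)).Δ
      = RatFunc.X ^ n * (1 - 432 * RatFunc.X ^ n) := by
    simp only [WeierstrassCurve.Δ, WeierstrassCurve.b₂, WeierstrassCurve.b₄,
      WeierstrassCurve.b₆, WeierstrassCurve.b₈]
    ring
  have hcoeff : ((Polynomial.X : Polynomial F) ^ n * (1 - 432 * Polynomial.X ^ n)).coeff n = 1 := by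
    have h0 := Polynomial.coeff_X_pow_mul ((1 : Polynomial F) - 432 * Polynomial.X ^ n) n 0
    rw [zero_add] at h0
    rw [h0]
    simp [Polynomial.coeff_one, Polynomial.coeff_X_pow, hn.ne']
    exact fun h => absurd h.symm hn.ne'
  have hpoly : (Polynomial.X ^ n * (1 - 432 * Polynomial.X ^ n) : Polynomial F) ≠ 0 := by
    intro h
    rw [h, Polynomial.coeff_zero] at hcoeff
    exact one_ne_zero hcoeff.symm
  have hne : (RatFunc.X : RatFunc F) ^ n * (1 - 432 * RatFunc.X ^ n) ≠ 0 := by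
    rw [hkey]
    exact fun h => hpoly (hinj (by simpa using h))
  have hc₄ : ({ a₁ := 1, a₂ := 0, a₃ := 0, a₄ := 0, a₆ := -(RatFunc.X ^ n) } : WeierstrassCurve (RatFunc F)).c₄
      = 1 := by
    simp only [WeierstrassCurve.c₄, WeierstrassCurve.b₂, WeierstrassCurve.b₄]
    ring
  refine ⟨hΔ, hΔ ▸ hne, ?_, ?_⟩
  · rw [WeierstrassCurve.jInv, hc₄, hΔ, one_pow, one_div]
  · intro c hc
    rw [WeierstrassCurve.jInv, hc₄, hΔ, one_pow, one_div] at hc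
    have hc0 : c ≠ 0 := fun h => hne (inv_eq_zero.mp (by rw [hc, h, map_zero]))
    have heq : (RatFunc.X : RatFunc F) ^ n * (1 - 432 * RatFunc.X ^ n) = RatFunc.C c⁻¹ := by
      have h4 := congrArg (·⁻¹) hc
      simp only [inv_inv] at h4
      rw [h4, ← map_inv₀]
    rw [hkey, ← RatFunc.algebraMap_C c⁻¹] at heq
    have h2 := hinj heq
    have h3 := congrArg (fun q => Polynomial.coeff q n) h2
    simp only [hcoeff, Polynomial.coeff_C, hn.ne', if_neg] at h3
    simp [hn.ne'] at h3
end
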